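/- arXiv:2407.11577 — 5 statements merged into one kernel-verified Lean document; each statement's English description precedes it below -/
import Mathlib

section
/- Let Γ be a rectifiable Jordan curve in ℂ of length 2π with arc-length parametrization z(s), 0 ≤ s < 2π. Then for every measurable function f : Γ → ℂ, ‖f∘z‖_{H^{1/2}(𝕊)}² ≤ (π²/4) ‖f‖_{H^{1/2}(Γ)}², where ‖f∘z‖_{H^{1/2}(𝕊)}² = (1/(4π²)) ∫₀^{2π}∫₀^{2π} |f(z(t)) − f(z(s))|²/|e^{it} − e^{is}|² dt ds (both sides possibly infinite). -/
open MeasureTheory Metric Set Real ENNReal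

noncomputable section

/-- A Jordan curve in `ℂ`: the image of a continuous `2π`-periodic map which is
injective on a period interval. -/
def IsJordanCurve (Γ : Set ℂ) : Prop :=
  ∃ φ : ℝ → ℂ, Continuous φ ∧ Function.Periodic φ (2 * π) ∧
    InjOn φ (Ico 0 (2 * π)) ∧ φ '' Ico 0 (2 * π) = Γ

/-- `σ` and `τ` are the two (closed) subarcs of the Jordan curve `Γ` determined by the
points `z₁, z₂ ∈ Γ`: they are connected, cover `Γ` and meet exactly in `{z₁, z₂}`. -/
def IsArcPair (Γ : Set ℂ) (z₁ z₂ : ℂ) (σ τ : Set ℂ) : Prop :=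
  IsConnected σ ∧ IsConnected τ ∧ σ ∪ τ = Γ ∧ σ ∩ τ = {z₁, z₂}

/-- A quasicircle: a Jordan curve satisfying the Ahlfors three-point condition, i.e.
there is `A ≥ 1` such that whenever `z₃` lies on the subarc of smaller diameter between
`z₁` and `z₂`, one has `|z₁ - z₃| ≤ A * |z₁ - z₂|`. -/
def IsQuasicircle (Γ : Set ℂ) : Prop :=
  IsJordanCurve Γ ∧ ∃ A : ℝ, 1 ≤ A ∧ ∀ z₁ ∈ Γ, ∀ z₂ ∈ Γ, ∀ σ τ : Set ℂ,
    IsArcPair Γ z₁ z₂ σ τ → Metric.diam σ ≤ Metric.diam τ →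
    ∀ z₃ ∈ σ, ‖z₁ - z₃‖ ≤ A * ‖z₁ - z₂‖

/-- A `K`-chord-arc curve: a rectifiable Jordan curve such that the length (one-dimensional
Hausdorff measure) of the shorter subarc between `z₁` and `z₂` is at most `K * |z₁ - z₂|`. -/
def IsChordArcWith (Γ : Set ℂ) (K : ℝ) : Prop :=
  IsJordanCurve Γ ∧ μH[1] Γ < ⊤ ∧
    ∀ z₁ ∈ Γ, ∀ z₂ ∈ Γ, ∀ σ τ : Set ℂ, IsArcPair Γ z₁ z₂ σ τ →
      μH[1] σ ≤ μH[1] τ → μH[1] σ ≤ ENNReal.ofReal (K * ‖z₁ - z₂‖)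

/-- A chord-arc curve: `K`-chord-arc for some `K > 0`. -/
def IsChordArc (Γ : Set ℂ) : Prop := ∃ K : ℝ, 0 < K ∧ IsChordArcWith Γ K

/-- The interior domain of a Jordan curve `Γ`: the bounded complementary component. -/
def IsInteriorDomain (Γ Ω : Set ℂ) : Prop :=
  IsOpen Ω ∧ IsConnected Ω ∧ Bornology.IsBounded Ω ∧ Disjoint Ω Γ ∧ frontier Ω = Γ

/-- The (finite part of the) exterior domain of a Jordan curve `Γ`:
the unbounded complementary component. -/
def IsExteriorDomain (Γ Ωe : Set ℂ) : Prop :=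
  IsOpen Ωe ∧ IsConnected Ωe ∧ ¬ Bornology.IsBounded Ωe ∧ Disjoint Ωe Γ ∧ frontier Ωe = Γ

/-- The Laplacian of `F : ℂ → ℂ` at `z`, computed from real partial derivatives in the
directions `1` and `I`. -/
def laplacianAt (F : ℂ → ℂ) (z : ℂ) : ℂ :=
  fderiv ℝ (fun w => fderiv ℝ F w 1) z 1 +
    fderiv ℝ (fun w => fderiv ℝ F w Complex.I) z Complex.I

/-- `F` is harmonic on the set `U`. -/
def HarmonicOnSet (F : ℂ → ℂ) (U : Set ℂ) : Prop :=
  ContDiffOn ℝ 2 F U ∧ ∀ z ∈ U, laplacianAt F z = 0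

/-- The (normalized) Dirichlet energy `1/(2π) ∬_U |∇F|²` of `F` over `U`,
with value in `ℝ≥0∞`. -/
def dirichletEnergy (U : Set ℂ) (F : ℂ → ℂ) : ℝ≥0∞ :=
  (ENNReal.ofReal (2 * π))⁻¹ *
    ∫⁻ z in U, ENNReal.ofReal (‖fderiv ℝ F z 1‖ ^ 2 + ‖fderiv ℝ F z Complex.I‖ ^ 2)

/-- `F` is the solution of the Dirichlet problem on `Ω` with boundary values `f` on `Γ`:
harmonic on `Ω`, continuous up to the boundary, equal to `f` on `Γ`. -/
def IsDirichletSolution (Γ Ω : Set ℂ) (f F : ℂ → ℂ) : Prop :=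
  HarmonicOnSet F Ω ∧ ContinuousOn F (Ω ∪ Γ) ∧ EqOn F f Γ

/-- The reflection `z ↦ 1 / z̄` in the unit circle. -/
def conjInv (z : ℂ) : ℂ := ((starRingEnd ℂ) z)⁻¹

/-- `Fe` solves the exterior Dirichlet problem on the unbounded component `Ωe` with boundary
values `f` on `Γ`, and `z ↦ Fe (1/z̄)` extends harmonically across `0`
(i.e. `Fe` is harmonic at `∞` on the Riemann sphere). -/
def IsExtDirichletSolution (Γ Ωe : Set ℂ) (f Fe : ℂ → ℂ) : Prop :=
  HarmonicOnSet Fe Ωe ∧ ContinuousOn Fe (Ωe ∪ Γ) ∧ EqOn Fe f Γ ∧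
    ∃ G : ℂ → ℂ, HarmonicOnSet G (conjInv '' Ωe ∪ {0}) ∧ ∀ z ∈ Ωe, G (conjInv z) = Fe z

/-- Arc-length measure on a rectifiable curve `Γ`: one-dimensional Hausdorff measure
restricted to `Γ`. -/
def arcMeasure (Γ : Set ℂ) : Measure ℂ := μH[1].restrict Γ

/-- The squared `H^{1/2}(Γ)` seminorm
`1/(4π²) ∬_{Γ×Γ} |u(z₁)-u(z₂)|²/|z₁-z₂|² |dz₁||dz₂|`, with value in `ℝ≥0∞`. -/
def H12sqOn (Γ : Set ℂ) (u : ℂ → ℂ) : ℝ≥0∞ :=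
  (ENNReal.ofReal (4 * π ^ 2))⁻¹ *
    ∫⁻ p : ℂ × ℂ, ENNReal.ofReal (‖u p.1 - u p.2‖ ^ 2 / ‖p.1 - p.2‖ ^ 2)
      ∂((arcMeasure Γ).prod (arcMeasure Γ))

/-- The squared `H^{1/2}(𝕊)` seminorm of `g` on the unit circle:
`1/(4π²) ∫₀^{2π}∫₀^{2π} |g(e^{it})-g(e^{is})|²/|e^{it}-e^{is}|² dt ds`. -/
def circleH12sq (g : ℂ → ℂ) : ℝ≥0∞ :=
  (ENNReal.ofReal (4 * π ^ 2))⁻¹ *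
    ∫⁻ t in Icc (0:ℝ) (2 * π), ∫⁻ s in Icc (0:ℝ) (2 * π),
      ENNReal.ofReal (‖g (Complex.exp ((t:ℂ) * Complex.I)) -
          g (Complex.exp ((s:ℂ) * Complex.I))‖ ^ 2 /
        ‖Complex.exp ((t:ℂ) * Complex.I) - Complex.exp ((s:ℂ) * Complex.I)‖ ^ 2)

/-- An arc-length parametrization of a rectifiable Jordan curve of length `2π`:
a continuous `2π`-periodic parametrization, injective on a period, whose image is `Γ`,
such that the arc `z([s,t])` has length `t - s` for `s < t < s + 2π`. -/
def IsArcLengthParam (Γ : Set ℂ) (z : ℝ → ℂ) : Prop :=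
  Continuous z ∧ Function.Periodic z (2 * π) ∧ InjOn z (Ico 0 (2 * π)) ∧
    z '' Ico 0 (2 * π) = Γ ∧
    ∀ s t : ℝ, s < t → t < s + 2 * π → μH[1] (z '' Icc s t) = ENNReal.ofReal (t - s)

/-- `Γ` is `M`-Ahlfors-regular: `length(Γ ∩ D(z,r)) ≤ M r` for every disk `D(z,r)`. -/
def IsAhlforsRegular (Γ : Set ℂ) (M : ℝ) : Prop :=
  ∀ z : ℂ, ∀ r : ℝ, 0 < r → μH[1] (Γ ∩ Metric.ball z r) ≤ ENNReal.ofReal (M * r)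

/-- A curve in `ℂ`: a continuous image of `[0,1]`. -/
def IsCurve (Γ : Set ℂ) : Prop := ∃ γ : ℝ → ℂ, Continuous γ ∧ γ '' Icc 0 1 = Γ

/-- A rectifiable curve: a curve with finite one-dimensional Hausdorff measure. -/
def IsRectifiableCurve (Γ : Set ℂ) : Prop := IsCurve Γ ∧ μH[1] Γ < ⊤

/-- The image of `Γ` under the Möbius transformation `z ↦ (az+b)/(cz+d)`,
with the point sent to `∞` removed. -/
def mobiusImage (a b c d : ℂ) (Γ : Set ℂ) : Set ℂ :=
  (fun z => (a * z + b) / (c * z + d)) '' {z ∈ Γ | c * z + d ≠ 0}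

/-- The spherical length of a set `E ⊂ ℂ`: the integral of the spherical density
`1/(1+|z|²)` against one-dimensional Hausdorff measure on `E`. -/
def sphericalLength (E : Set ℂ) : ℝ≥0∞ :=
  ∫⁻ z in E, ENNReal.ofReal ((1 + ‖z‖ ^ 2)⁻¹) ∂μH[1]

/-- `h` is an `η`-quasisymmetric homeomorphism of the unit circle `𝕊` onto the Jordan
curve `Γ`, where `η` is an increasing homeomorphism of `[0,∞)`. -/
def IsQuasisymmetricOnto (η : ℝ → ℝ) (h : ℂ → ℂ) (Γ : Set ℂ) : Prop :=
  ContinuousOn h (Metric.sphere (0:ℂ) 1) ∧ BijOn h (Metric.sphere (0:ℂ) 1) Γ ∧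
    StrictMonoOn η (Ici 0) ∧ ContinuousOn η (Ici 0) ∧ η '' Ici 0 = Ici 0 ∧
    ∀ z₀ ∈ Metric.sphere (0:ℂ) 1, ∀ z₁ ∈ Metric.sphere (0:ℂ) 1,
      ∀ z₂ ∈ Metric.sphere (0:ℂ) 1, z₀ ≠ z₂ →
        ‖h z₀ - h z₁‖ / ‖h z₀ - h z₂‖ ≤ η (‖z₀ - z₁‖ / ‖z₀ - z₂‖)

private lemma aux_key_exp (w : ℂ) : Complex.exp (w * Complex.I) - Complex.exp (-w * Complex.I) =
    2 * Complex.sin w * Complex.I := by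
  rw [Complex.sin]
  linear_combination (Complex.exp (w * Complex.I) - Complex.exp (-w * Complex.I)) * Complex.I_sq

private lemma aux_norm_exp_sub_exp (t s : ℝ) :
    ‖Complex.exp ((t:ℂ) * Complex.I) - Complex.exp ((s:ℂ) * Complex.I)‖ =
      2 * |Real.sin ((t - s) / 2)| := by
  have h1 : (t:ℂ) * Complex.I =
      (((t+s)/2 : ℝ) : ℂ) * Complex.I + (((t-s)/2 : ℝ) : ℂ) * Complex.I := by push_cast; ring
  have h2 : (s:ℂ) * Complex.I =
      (((t+s)/2 : ℝ) : ℂ) * Complex.I + -(((t-s)/2 : ℝ) : ℂ) * Complex.I := by push_cast; ring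
  rw [h1, h2, Complex.exp_add, Complex.exp_add, ← mul_sub, aux_key_exp]
  rw [norm_mul, Complex.norm_exp_ofReal_mul_I, one_mul, ← Complex.ofReal_sin]
  rw [norm_mul, norm_mul, Complex.norm_I, mul_one, Complex.norm_real]
  norm_num

private lemma aux_jordan {y D : ℝ} (h2 : |y| ≤ 2*π) (hD1 : D ≤ |y|) (hD2 : D ≤ 2*π - |y|) :
    2/π * D ≤ 2 * |Real.sin (y/2)| := by
  have habs : |Real.sin (y/2)| = |Real.sin (|y|/2)| := by
    rcases abs_cases y with ⟨h,_⟩|⟨h,_⟩ <;> rw [h]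
    rw [neg_div, Real.sin_neg, abs_neg]
  rw [habs]
  set x := |y| with hx
  have h0 : 0 ≤ x := abs_nonneg y
  have hπ := Real.pi_pos
  have h2pi : (0:ℝ) < 2/π := by positivity
  have hs : 0 ≤ Real.sin (x/2) :=
    Real.sin_nonneg_of_nonneg_of_le_pi (by linarith) (by linarith)
  rw [abs_of_nonneg hs]
  rcases le_total x π with h | h
  · have h1 := Real.mul_le_sin (x := x/2) (by linarith) (by linarith)
    have := mul_le_mul_of_nonneg_left hD1 h2pi.le
    linarith
  · have h1 := Real.mul_le_sin (x := π - x/2) (by linarith) (by linarith)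
    rw [Real.sin_pi_sub] at h1
    have := mul_le_mul_of_nonneg_left hD2 h2pi.le
    linarith

private lemma aux_chord_le {Γ : Set ℂ} {z : ℝ → ℂ} (hz : IsArcLengthParam Γ z)
    {s t : ℝ} (hst : s ≤ t) (h2 : t ≤ s + 2 * π) : ‖z t - z s‖ ≤ t - s := by
  obtain ⟨hc, hp, -, -, hlen⟩ := hz
  have hπ := Real.pi_pos
  rcases eq_or_lt_of_le hst with rfl | hlt
  · simp
  rcases eq_or_lt_of_le h2 with he | hlt2
  · rw [he, hp s]
    simp
    linarith
  set u := z t - z s with hu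
  by_cases hu0 : u = 0
  · rw [hu0]; simp; linarith
  have hnu : (0:ℝ) < ‖u‖ := norm_pos_iff.2 hu0
  set c : ℂ := (starRingEnd ℂ) u / ‖u‖ with hc'
  have hc1 : ‖c‖ = 1 := by
    rw [hc', norm_div, RCLike.norm_conj, Complex.norm_real, Real.norm_eq_abs,
      abs_of_pos hnu, div_self hnu.ne']
  set q : ℂ → ℝ := fun w => (c * w).re with hq
  have hqlip : LipschitzWith 1 q := by
    intro w₁ w₂
    rw [edist_dist, edist_dist, ENNReal.coe_one, one_mul]
    apply ENNReal.ofReal_le_ofReal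
    have : q w₁ - q w₂ = (c * (w₁ - w₂)).re := by simp [hq, mul_sub]
    rw [Real.dist_eq, this]
    calc |(c * (w₁ - w₂)).re| ≤ ‖c * (w₁ - w₂)‖ := Complex.abs_re_le_norm _
      _ = ‖w₁ - w₂‖ := by rw [norm_mul, hc1, one_mul]
      _ = dist w₁ w₂ := (dist_eq_norm _ _).symm
  have hqcont : Continuous q := hqlip.continuous
  have hqval : q (z t) - q (z s) = ‖u‖ := by
    have h1 : q (z t) - q (z s) = (c * u).re := by simp [hq, hu, mul_sub]
    have h2' : c * u = ((‖u‖ : ℝ) : ℂ) := by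
      rw [hc', div_mul_eq_mul_div, ← Complex.normSq_eq_conj_mul_self]
      rw [Complex.normSq_eq_norm_sq]
      push_cast
      rw [pow_two, mul_div_assoc, div_self (by exact_mod_cast hnu.ne' : (‖u‖:ℂ) ≠ 0), mul_one]
    rw [h1, h2', Complex.ofReal_re]
  set S : Set ℂ := z '' Icc s t with hS
  have hS1 : μH[1] S = ENNReal.ofReal (t - s) := hlen s t hlt hlt2
  have hScon : IsPreconnected S := (isPreconnected_Icc).image z hc.continuousOn
  have hTcon : IsPreconnected (q '' S) := hScon.image q hqcont.continuousOn
  have hmem1 : q (z s) ∈ q '' S := mem_image_of_mem q (mem_image_of_mem z (left_mem_Icc.2 hst))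
  have hmem2 : q (z t) ∈ q '' S := mem_image_of_mem q (mem_image_of_mem z (right_mem_Icc.2 hst))
  have hsub : Icc (q (z s)) (q (z t)) ⊆ q '' S := hTcon.Icc_subset hmem1 hmem2
  have hvol : ENNReal.ofReal ‖u‖ ≤ μH[1] (q '' S) := by
    rw [MeasureTheory.hausdorffMeasure_real]
    calc ENNReal.ofReal ‖u‖ = volume (Icc (q (z s)) (q (z t))) := by
          rw [Real.volume_Icc]; congr 1; linarith [hqval]
      _ ≤ volume (q '' S) := measure_mono hsub
  have himg : μH[1] (q '' S) ≤ μH[1] S := by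
    simpa using hqlip.hausdorffMeasure_image_le (by norm_num : (0:ℝ) ≤ 1) S
  have := hvol.trans (himg.trans_eq hS1)
  exact (ENNReal.ofReal_le_ofReal_iff (by linarith)).1 this

private lemma aux_lip_on {Γ : Set ℂ} {z : ℝ → ℂ} (hz : IsArcLengthParam Γ z)
    {a b : ℝ} (hab : b ≤ a + 2 * π) : LipschitzOnWith 1 z (Icc a b) := by
  rw [lipschitzOnWith_iff_dist_le_mul]
  intro x hx y hy
  rw [NNReal.coe_one, one_mul, dist_eq_norm, Real.dist_eq]
  rcases le_total y x with h | h
  · rw [abs_of_nonneg (by linarith)]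
    exact aux_chord_le hz h (by cases hx; cases hy; linarith)
  · rw [abs_of_nonpos (by linarith), norm_sub_rev]
    exact (aux_chord_le hz h (by cases hx; cases hy; linarith)).trans (by linarith)

private lemma aux_vol_le_image {Γ : Set ℂ} {z : ℝ → ℂ} (hz : IsArcLengthParam Γ z)
    {a b : ℝ} (hab : a < b) (hb : b < a + 2 * π) {B : Set ℝ} (hB : MeasurableSet B)
    (hBs : B ⊆ Icc a b) : volume B ≤ μH[1] (z '' B) := by
  have hIcc : μH[1] (z '' Icc a b) = ENNReal.ofReal (b - a) := hz.2.2.2.2 a b hab hb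
  have hlip : LipschitzOnWith 1 z (Icc a b \ B) :=
    (aux_lip_on hz (le_of_lt hb)).mono diff_subset
  have hdiff : μH[1] (z '' (Icc a b \ B)) ≤ volume (Icc a b \ B) := by
    have := hlip.hausdorffMeasure_image_le (le_of_lt one_pos)
    rw [MeasureTheory.hausdorffMeasure_real] at this
    simpa using this
  have hvoldiff : volume (Icc a b \ B) = ENNReal.ofReal (b - a) - volume B := by
    have hvBne : volume B ≠ ⊤ :=
      ((measure_mono hBs).trans_lt (by rw [Real.volume_Icc]; exact ENNReal.ofReal_lt_top)).ne
    rw [measure_diff hBs hB.nullMeasurableSet hvBne, Real.volume_Icc]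
  have hsplit : ENNReal.ofReal (b - a) ≤ μH[1] (z '' B) + (ENNReal.ofReal (b - a) - volume B) := by
    calc ENNReal.ofReal (b - a) = μH[1] (z '' Icc a b) := hIcc.symm
      _ ≤ μH[1] (z '' B ∪ z '' (Icc a b \ B)) := by
          apply measure_mono; rw [← image_union]
          exact image_mono (f := z) (fun x hx => by
            by_cases h : x ∈ B
            · exact mem_union_left _ h
            · exact mem_union_right _ ⟨hx, h⟩)
      _ ≤ μH[1] (z '' B) + μH[1] (z '' (Icc a b \ B)) := measure_union_le _ _
      _ ≤ μH[1] (z '' B) + (ENNReal.ofReal (b - a) - volume B) := by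
          rw [← hvoldiff]; exact add_le_add le_rfl hdiff
  have hvB : volume B ≤ ENNReal.ofReal (b - a) := by
    calc volume B ≤ volume (Icc a b) := measure_mono hBs
      _ = ENNReal.ofReal (b - a) := Real.volume_Icc
  have hfin : ENNReal.ofReal (b - a) - volume B ≠ ⊤ :=
    (tsub_le_self.trans_lt ENNReal.ofReal_lt_top).ne
  have := tsub_le_tsub_right hsplit (ENNReal.ofReal (b - a) - volume B)
  rwa [ENNReal.sub_sub_cancel ENNReal.ofReal_ne_top hvB,
    ENNReal.add_sub_cancel_right hfin] at this

private lemma aux_map_le_arc {Γ : Set ℂ} {z : ℝ → ℂ} (hz : IsArcLengthParam Γ z) :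
    Measure.map z (volume.restrict (Ico 0 (2 * π))) ≤ arcMeasure Γ := by
  have hπ := Real.pi_pos
  rw [Measure.le_iff]
  intro A hA
  rw [Measure.map_apply hz.1.measurable hA, Measure.restrict_apply (hz.1.measurable hA),
    arcMeasure, Measure.restrict_apply hA]
  set B : Set ℝ := z ⁻¹' A ∩ Ico 0 (2 * π) with hB
  have hBm : MeasurableSet B := (hz.1.measurable hA).inter measurableSet_Ico
  have himg : z '' B ⊆ A ∩ Γ := by
    rintro - ⟨x, ⟨hx1, hx2⟩, rfl⟩
    exact ⟨hx1, hz.2.2.2.1 ▸ mem_image_of_mem z hx2⟩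
  have hineq : ∀ n : ℕ, volume (B ∩ Icc 0 (2 * π - 1 / (n + 1))) ≤ μH[1] (A ∩ Γ) := by
    intro n
    by_cases hn : (0:ℝ) < 2 * π - 1 / (n + 1)
    · calc volume (B ∩ Icc 0 (2 * π - 1 / (n + 1)))
          ≤ μH[1] (z '' (B ∩ Icc 0 (2 * π - 1 / (n + 1)))) := by
            have h1n : (0:ℝ) < 1 / ((n:ℝ) + 1) := by positivity
            exact aux_vol_le_image hz hn (by linarith) (hBm.inter measurableSet_Icc)
              inter_subset_right
      _ ≤ μH[1] (A ∩ Γ) := measure_mono ((image_mono (f := z) inter_subset_left).trans himg)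
    · have : volume (Icc (0:ℝ) (2 * π - 1 / (n + 1))) = 0 := by
        rw [Real.volume_Icc]; exact ENNReal.ofReal_eq_zero.2 (by linarith)
      calc volume (B ∩ Icc 0 (2 * π - 1 / (n + 1))) ≤ volume (Icc (0:ℝ) (2 * π - 1/(n+1))) :=
            measure_mono inter_subset_right
        _ = 0 := this
        _ ≤ _ := by simp
  have hmono : Monotone (fun n : ℕ => B ∩ Icc 0 (2 * π - 1 / (n + 1))) := by
    intro m n hmn
    apply inter_subset_inter_right
    apply Icc_subset_Icc le_rfl
    have : (1:ℝ) / (n + 1) ≤ 1 / (m + 1) := by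
      apply one_div_le_one_div_of_le (by positivity)
      exact_mod_cast Nat.succ_le_succ hmn
    linarith
  have hunion : (⋃ n : ℕ, B ∩ Icc 0 (2 * π - 1 / (n + 1))) = B := by
    ext x
    simp only [mem_iUnion, mem_inter_iff, mem_Icc]
    constructor
    · rintro ⟨n, hx, -⟩; exact hx
    · intro hx
      have hx2 : 0 ≤ x := hx.2.1
      have hx3 : x < 2 * π := hx.2.2
      obtain ⟨n, hn⟩ := exists_nat_one_div_lt (show (0:ℝ) < 2 * π - x by linarith)
      exact ⟨n, hx, hx2, by linarith⟩
  calc volume B = ⨆ n : ℕ, volume (B ∩ Icc 0 (2 * π - 1 / (n + 1))) := by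
        conv_lhs => rw [← hunion]
        exact hmono.directed_le.measure_iUnion
    _ ≤ μH[1] (A ∩ Γ) := iSup_le hineq

/-- For a rectifiable Jordan curve of length `2π` with arc-length parametrization `z` and any
measurable `f`, one has `‖f ∘ z‖_{H^{1/2}(𝕊)}² ≤ (π²/4) ‖f‖_{H^{1/2}(Γ)}²`. -/
theorem circle_H12_le_curve_H12 (Γ : Set ℂ) (z : ℝ → ℂ)
    (hJ : IsJordanCurve Γ) (hlen : μH[1] Γ = ENNReal.ofReal (2 * π))
    (hz : IsArcLengthParam Γ z) (f : ℂ → ℂ) (hf : Measurable f) :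
    (ENNReal.ofReal (4 * π ^ 2))⁻¹ *
      ∫⁻ t in Icc (0:ℝ) (2 * π), ∫⁻ s in Icc (0:ℝ) (2 * π),
        ENNReal.ofReal (‖f (z t) - f (z s)‖ ^ 2 /
          ‖Complex.exp ((t:ℂ) * Complex.I) - Complex.exp ((s:ℂ) * Complex.I)‖ ^ 2) ≤
      ENNReal.ofReal (π ^ 2 / 4) * H12sqOn Γ f := by
  have hπ := Real.pi_pos
  haveI : IsFiniteMeasure (arcMeasure Γ) := by
    constructor
    rw [arcMeasure, Measure.restrict_apply_univ, hlen]
    exact ENNReal.ofReal_lt_top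
  set ν := arcMeasure Γ with hν
  set k := ENNReal.ofReal (π ^ 2 / 4) with hk
  set G : ℂ × ℂ → ℝ≥0∞ := fun p => ENNReal.ofReal (‖f p.1 - f p.2‖ ^ 2 / ‖p.1 - p.2‖ ^ 2)
    with hG
  have hGm : Measurable G := by
    apply ENNReal.measurable_ofReal.comp
    exact (((hf.comp measurable_fst).sub (hf.comp measurable_snd)).norm.pow_const 2).div
      ((measurable_fst.sub measurable_snd).norm.pow_const 2)
  have hFm : Measurable fun w => ∫⁻ w₂, G (w, w₂) ∂ν := hGm.lintegral_prod_right'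
  -- pointwise bound
  have key : ∀ t ∈ Icc (0:ℝ) (2 * π), ∀ s ∈ Icc (0:ℝ) (2 * π),
      ENNReal.ofReal (‖f (z t) - f (z s)‖ ^ 2 /
          ‖Complex.exp ((t:ℂ) * Complex.I) - Complex.exp ((s:ℂ) * Complex.I)‖ ^ 2) ≤
        k * G (z t, z s) := by
    intro t ht s hs
    by_cases hzz : z t = z s
    · rw [hzz]
      simp only [sub_self, norm_zero]
      norm_num
    set D := ‖z t - z s‖ with hD
    have hDpos : 0 < D := norm_pos_iff.2 (sub_ne_zero.2 hzz)
    have hD1 : D ≤ |t - s| := by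
      rcases le_total s t with h | h
      · rw [abs_of_nonneg (by linarith)]
        exact aux_chord_le hz h (by cases ht; cases hs; linarith)
      · rw [abs_of_nonpos (by linarith), hD, norm_sub_rev]
        exact (aux_chord_le hz h (by cases ht; cases hs; linarith)).trans (by linarith)
    have hD2 : D ≤ 2 * π - |t - s| := by
      rcases le_total s t with h | h
      · rw [abs_of_nonneg (by linarith)]
        have hzs : z (s + 2 * π) = z s := hz.2.1 s
        have := aux_chord_le hz (show t ≤ s + 2 * π by cases ht; cases hs; linarith)
          (show s + 2 * π ≤ t + 2 * π by linarith)
        rw [hzs] at this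
        rw [hD, norm_sub_rev]
        linarith
      · rw [abs_of_nonpos (by linarith)]
        have hzt : z (t + 2 * π) = z t := hz.2.1 t
        have := aux_chord_le hz (show s ≤ t + 2 * π by cases ht; cases hs; linarith)
          (show t + 2 * π ≤ s + 2 * π by linarith)
        rw [hzt] at this
        rw [hD]
        linarith
    have habs2π : |t - s| ≤ 2 * π := by
      rcases abs_cases (t - s) with ⟨h, _⟩ | ⟨h, _⟩ <;> rw [h] <;> (cases ht; cases hs; linarith)
    have he : 2 / π * D ≤
        ‖Complex.exp ((t:ℂ) * Complex.I) - Complex.exp ((s:ℂ) * Complex.I)‖ := by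
      rw [aux_norm_exp_sub_exp]
      exact aux_jordan habs2π hD1 hD2
    have hepos : (0:ℝ) < 2 / π * D := by positivity
    have hsq : (2 / π * D) ^ 2 ≤
        ‖Complex.exp ((t:ℂ) * Complex.I) - Complex.exp ((s:ℂ) * Complex.I)‖ ^ 2 :=
      pow_le_pow_left₀ hepos.le he 2
    have harith : ‖f (z t) - f (z s)‖ ^ 2 /
        ‖Complex.exp ((t:ℂ) * Complex.I) - Complex.exp ((s:ℂ) * Complex.I)‖ ^ 2 ≤
        π ^ 2 / 4 * (‖f (z t) - f (z s)‖ ^ 2 / D ^ 2) := by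
      have h1 : ‖f (z t) - f (z s)‖ ^ 2 /
          ‖Complex.exp ((t:ℂ) * Complex.I) - Complex.exp ((s:ℂ) * Complex.I)‖ ^ 2 ≤
          ‖f (z t) - f (z s)‖ ^ 2 / (2 / π * D) ^ 2 := by
        have h0 : (0:ℝ) < (2 / π * D) ^ 2 := by positivity
        exact div_le_div_of_nonneg_left (by positivity) h0 hsq
      have h2 : ‖f (z t) - f (z s)‖ ^ 2 / (2 / π * D) ^ 2 =
          π ^ 2 / 4 * (‖f (z t) - f (z s)‖ ^ 2 / D ^ 2) := by
        field_simp
        ring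
      linarith
    calc ENNReal.ofReal (‖f (z t) - f (z s)‖ ^ 2 /
          ‖Complex.exp ((t:ℂ) * Complex.I) - Complex.exp ((s:ℂ) * Complex.I)‖ ^ 2)
        ≤ ENNReal.ofReal (π ^ 2 / 4 * (‖f (z t) - f (z s)‖ ^ 2 / D ^ 2)) :=
          ENNReal.ofReal_le_ofReal harith
      _ = k * G (z t, z s) := by
          rw [hk, hG, ENNReal.ofReal_mul (by positivity : (0:ℝ) ≤ π ^ 2 / 4)]
  -- transfer measures
  have hmap := aux_map_le_arc hz
  have hrest : (volume : Measure ℝ).restrict (Icc 0 (2 * π)) =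
      (volume : Measure ℝ).restrict (Ico 0 (2 * π)) :=
    (MeasureTheory.restrict_Ico_eq_restrict_Icc).symm
  have hinner : ∀ t : ℝ, ∫⁻ s in Icc (0:ℝ) (2 * π), G (z t, z s) ≤
      ∫⁻ w₂, G (z t, w₂) ∂ν := by
    intro t
    have hGt : Measurable fun w => G (z t, w) :=
      hGm.comp (measurable_const.prodMk measurable_id)
    calc ∫⁻ s in Icc (0:ℝ) (2 * π), G (z t, z s)
        = ∫⁻ s in Ico (0:ℝ) (2 * π), G (z t, z s) := by rw [hrest]
      _ = ∫⁻ w, G (z t, w) ∂(Measure.map z (volume.restrict (Ico 0 (2 * π)))) :=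
          (lintegral_map hGt hz.1.measurable).symm
      _ ≤ ∫⁻ w₂, G (z t, w₂) ∂ν := lintegral_mono' hmap le_rfl
  have houter : ∫⁻ t in Icc (0:ℝ) (2 * π), ∫⁻ w₂, G (z t, w₂) ∂ν ≤
      ∫⁻ w₁, ∫⁻ w₂, G (w₁, w₂) ∂ν ∂ν := by
    calc ∫⁻ t in Icc (0:ℝ) (2 * π), ∫⁻ w₂, G (z t, w₂) ∂ν
        = ∫⁻ t in Ico (0:ℝ) (2 * π), ∫⁻ w₂, G (z t, w₂) ∂ν := by rw [hrest]
      _ = ∫⁻ w₁, (fun w => ∫⁻ w₂, G (w, w₂) ∂ν) w₁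
            ∂(Measure.map z (volume.restrict (Ico 0 (2 * π)))) :=
          (lintegral_map hFm hz.1.measurable).symm
      _ ≤ ∫⁻ w₁, ∫⁻ w₂, G (w₁, w₂) ∂ν ∂ν := lintegral_mono' hmap le_rfl
  have hchain : (∫⁻ t in Icc (0:ℝ) (2 * π), ∫⁻ s in Icc (0:ℝ) (2 * π),
      ENNReal.ofReal (‖f (z t) - f (z s)‖ ^ 2 /
        ‖Complex.exp ((t:ℂ) * Complex.I) - Complex.exp ((s:ℂ) * Complex.I)‖ ^ 2)) ≤
      k * ∫⁻ p, G p ∂(ν.prod ν) := by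
    calc (∫⁻ t in Icc (0:ℝ) (2 * π), ∫⁻ s in Icc (0:ℝ) (2 * π),
        ENNReal.ofReal (‖f (z t) - f (z s)‖ ^ 2 /
          ‖Complex.exp ((t:ℂ) * Complex.I) - Complex.exp ((s:ℂ) * Complex.I)‖ ^ 2))
        ≤ ∫⁻ t in Icc (0:ℝ) (2 * π), k * ∫⁻ w₂, G (z t, w₂) ∂ν := by
          apply setLIntegral_mono ((hFm.comp hz.1.measurable).const_mul k)
          intro t ht
          calc ∫⁻ s in Icc (0:ℝ) (2 * π),
              ENNReal.ofReal (‖f (z t) - f (z s)‖ ^ 2 /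
                ‖Complex.exp ((t:ℂ) * Complex.I) - Complex.exp ((s:ℂ) * Complex.I)‖ ^ 2)
              ≤ ∫⁻ s in Icc (0:ℝ) (2 * π), k * G (z t, z s) := by
                apply setLIntegral_mono
                  (((hGm.comp ((measurable_const.prodMk hz.1.measurable))).const_mul k))
                intro s hs
                exact key t ht s hs
            _ = k * ∫⁻ s in Icc (0:ℝ) (2 * π), G (z t, z s) :=
                lintegral_const_mul' _ _ ENNReal.ofReal_ne_top
            _ ≤ k * ∫⁻ w₂, G (z t, w₂) ∂ν := mul_le_mul_right (hinner t) k
      _ = k * ∫⁻ t in Icc (0:ℝ) (2 * π), ∫⁻ w₂, G (z t, w₂) ∂ν :=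
          lintegral_const_mul' _ _ ENNReal.ofReal_ne_top
      _ ≤ k * ∫⁻ w₁, ∫⁻ w₂, G (w₁, w₂) ∂ν ∂ν := mul_le_mul_right houter k
      _ = k * ∫⁻ p, G p ∂(ν.prod ν) := by
          rw [lintegral_prod _ hGm.aemeasurable]
  have hH12 : H12sqOn Γ f = (ENNReal.ofReal (4 * π ^ 2))⁻¹ * ∫⁻ p, G p ∂(ν.prod ν) := rfl
  calc (ENNReal.ofReal (4 * π ^ 2))⁻¹ *
      ∫⁻ t in Icc (0:ℝ) (2 * π), ∫⁻ s in Icc (0:ℝ) (2 * π),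
        ENNReal.ofReal (‖f (z t) - f (z s)‖ ^ 2 /
          ‖Complex.exp ((t:ℂ) * Complex.I) - Complex.exp ((s:ℂ) * Complex.I)‖ ^ 2)
      ≤ (ENNReal.ofReal (4 * π ^ 2))⁻¹ * (k * ∫⁻ p, G p ∂(ν.prod ν)) :=
        mul_le_mul_right hchain _
    _ = k * H12sqOn Γ f := by rw [hH12]; ring

end
end

section
/- Let Γ be an M-regular rectifiable curve in ℂ and let T be a Möbius transformation. Then T(Γ) ∖ {∞} is 12M-regular, i.e., length((T(Γ) ∖ {∞}) ∩ D(z,r)) ≤ 12M r for every z ∈ ℂ and r > 0. -/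
open MeasureTheory Metric Set Real ENNReal

noncomputable section

lemma lipOn_inv {s : ℝ} (hs : 0 < s) :
    LipschitzOnWith ((s⁻¹ * s⁻¹).toNNReal) (fun z : ℂ => z⁻¹) {z : ℂ | s ≤ ‖z‖} := by
  rw [lipschitzOnWith_iff_dist_le_mul]
  intro x hx y hy
  simp only [Set.mem_setOf_eq] at hx hy
  have hx0 : x ≠ 0 := by intro h; rw [h, norm_zero] at hx; linarith
  have hy0 : y ≠ 0 := by intro h; rw [h, norm_zero] at hy; linarith
  have hxp : (0:ℝ) < ‖x‖ := lt_of_lt_of_le hs hx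
  have hyp : (0:ℝ) < ‖y‖ := lt_of_lt_of_le hs hy
  have key : x⁻¹ - y⁻¹ = (y - x) / (x * y) := by field_simp
  rw [dist_eq_norm, dist_eq_norm, key, norm_div, norm_mul,
    Real.coe_toNNReal _ (by positivity), norm_sub_rev]
  calc ‖x - y‖ / (‖x‖ * ‖y‖) ≤ ‖x - y‖ / (s * s) := by
        gcongr
    _ = s⁻¹ * s⁻¹ * ‖x - y‖ := by field_simp

lemma affine_reg {Γ : Set ℂ} {M : ℝ} {α β : ℂ} (hα : α ≠ 0)
    (h : IsAhlforsRegular Γ M) : IsAhlforsRegular ((fun z => α * z + β) '' Γ) M := by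
  intro z r hr
  have hαn : (0:ℝ) < ‖α‖ := norm_pos_iff.mpr hα
  have hlip : LipschitzWith ‖α‖₊ (fun w : ℂ => α * w + β) := by
    apply LipschitzWith.of_dist_le_mul
    intro x y
    rw [dist_eq_norm, dist_eq_norm, show α*x+β - (α*y+β) = α*(x-y) by ring, norm_mul]
    rfl
  have hpre : (fun w : ℂ => α * w + β) ⁻¹' (ball z r) = ball ((z - β)/α) (r / ‖α‖) := by
    ext w
    simp only [mem_ball, Set.mem_preimage, dist_eq_norm]
    rw [show α*w + β - z = α * (w - (z-β)/α) by field_simp; ring, norm_mul, ← lt_div_iff₀' hαn]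
  calc μH[1] ((fun w : ℂ => α * w + β) '' Γ ∩ ball z r)
      = μH[1] ((fun w : ℂ => α * w + β) '' (Γ ∩ ball ((z - β)/α) (r / ‖α‖))) := by
        rw [← hpre, Set.image_inter_preimage]
    _ ≤ (‖α‖₊ : ℝ≥0∞) ^ (1:ℝ) * μH[1] (Γ ∩ ball ((z - β)/α) (r / ‖α‖)) :=
        hlip.hausdorffMeasure_image_le zero_le_one _
    _ ≤ ENNReal.ofReal ‖α‖ * ENNReal.ofReal (M * (r / ‖α‖)) := by
        rw [ENNReal.rpow_one, ofReal_norm, enorm_eq_nnnorm]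
        exact mul_le_mul_right (h _ _ (by positivity)) _
    _ ≤ ENNReal.ofReal (M * r) := by
        rw [← ENNReal.ofReal_mul (norm_nonneg α)]
        apply ENNReal.ofReal_le_ofReal
        exact le_of_eq (by
          rw [mul_comm M (r / ‖α‖), ← mul_assoc, mul_div_cancel₀ _ hαn.ne', mul_comm])

lemma inv_reg {Γ : Set ℂ} {M : ℝ} (hM : 0 ≤ M) (h : IsAhlforsRegular Γ M) :
    IsAhlforsRegular ((fun z : ℂ => z⁻¹) '' (Γ \ {0})) (12 * M) := by
  intro w r hr
  rcases le_or_gt ‖w‖ (2*r) with hw | hw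
  · -- near case: dyadic annuli
    set t : ℝ := (3*r)⁻¹ with ht
    have ht0 : 0 < t := by positivity
    set A : ℕ → Set ℂ := fun k => {z : ℂ | (2:ℝ)^k * t ≤ ‖z‖ ∧ ‖z‖ < (2:ℝ)^(k+1) * t}
      with hA
    have hsub : (fun z : ℂ => z⁻¹) '' (Γ \ {0}) ∩ ball w r ⊆
        ⋃ k, (fun z : ℂ => z⁻¹) '' (Γ ∩ A k) := by
      rintro u ⟨⟨ζ, ⟨hζΓ, hζ0⟩, rfl⟩, hu⟩
      simp only [Set.mem_singleton_iff] at hζ0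
      have hζn : (0:ℝ) < ‖ζ‖ := norm_pos_iff.mpr hζ0
      rw [mem_ball, dist_eq_norm] at hu
      have hub : ‖ζ‖⁻¹ < 3*r := by
        have h1 : ‖ζ⁻¹‖ ≤ ‖ζ⁻¹ - w‖ + ‖w‖ := by
          simpa using norm_add_le (ζ⁻¹ - w) w
        rw [norm_inv] at h1
        linarith
      have hlb : t < ‖ζ‖ := by
        have := mul_lt_mul_of_pos_left hub hζn
        rw [mul_inv_cancel₀ hζn.ne'] at this
        rw [ht, inv_eq_one_div, div_lt_iff₀ (by positivity)]
        linarith [mul_comm ‖ζ‖ (3*r)]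
      obtain ⟨n, hn⟩ := pow_unbounded_of_one_lt (‖ζ‖/t) (one_lt_two (α := ℝ))
      have hPex : ∃ n : ℕ, ‖ζ‖ < (2:ℝ)^n * t := ⟨n, by
        rw [← div_lt_iff₀ ht0] at *; exact hn⟩
      classical
      set n₀ := Nat.find hPex with hn₀
      have hn₀pos : 0 < n₀ := by
        rcases Nat.eq_zero_or_pos n₀ with h0 | h0
        · exfalso
          have := Nat.find_spec hPex
          rw [← hn₀, h0] at this
          simp only [pow_zero, one_mul] at this
          linarith
        · exact h0
      refine Set.mem_iUnion.mpr ⟨n₀ - 1, ⟨ζ, ⟨hζΓ, ?_, ?_⟩, rfl⟩⟩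
      · have := Nat.find_min hPex (m := n₀ - 1) (by omega)
        push_neg at this
        exact this
      · have := Nat.find_spec hPex
        rw [← hn₀] at this
        have hk : n₀ - 1 + 1 = n₀ := by omega
        rw [hk]
        exact this
    refine le_trans (measure_mono hsub) (le_trans (measure_iUnion_le _) ?_)
    have hterm : ∀ k : ℕ, μH[1] ((fun z : ℂ => z⁻¹) '' (Γ ∩ A k)) ≤
        ENNReal.ofReal (6*M*r) * (ENNReal.ofReal 2⁻¹)^k := by
      intro k
      have htk : (0:ℝ) < (2:ℝ)^k * t := by positivity
      have hlip : LipschitzOnWith ((((2:ℝ)^k * t)⁻¹ * ((2:ℝ)^k * t)⁻¹).toNNReal)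
          (fun z : ℂ => z⁻¹) (Γ ∩ A k) := by
        apply (lipOn_inv htk).mono
        intro z hz
        exact hz.2.1
      refine le_trans (hlip.hausdorffMeasure_image_le zero_le_one) ?_
      have hball : μH[1] (Γ ∩ A k) ≤ ENNReal.ofReal (M * ((2:ℝ)^(k+1) * t)) := by
        refine le_trans (measure_mono ?_) (h 0 ((2:ℝ)^(k+1) * t) (by positivity))
        intro z hz
        exact ⟨hz.1, by simpa [mem_ball, dist_eq_norm] using hz.2.2⟩
      calc (((((2:ℝ)^k * t)⁻¹ * ((2:ℝ)^k * t)⁻¹).toNNReal : ℝ≥0∞)) ^ (1:ℝ) * μH[1] (Γ ∩ A k)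
          ≤ ENNReal.ofReal (((2:ℝ)^k * t)⁻¹ * ((2:ℝ)^k * t)⁻¹) *
            ENNReal.ofReal (M * ((2:ℝ)^(k+1) * t)) := by
            rw [ENNReal.rpow_one]
            exact mul_le_mul_right hball _
        _ = ENNReal.ofReal ((((2:ℝ)^k * t)⁻¹ * ((2:ℝ)^k * t)⁻¹) * (M * ((2:ℝ)^(k+1) * t))) := by
            rw [← ENNReal.ofReal_mul (by positivity)]
        _ = ENNReal.ofReal (6*M*r * (2⁻¹:ℝ)^k) := by
            congr 1
            have h2k : ((2:ℝ)^k) ≠ 0 := by positivity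
            have hrne : r ≠ 0 := hr.ne'
            rw [ht, pow_succ, inv_pow]
            field_simp
            ring
        _ = ENNReal.ofReal (6*M*r) * (ENNReal.ofReal 2⁻¹)^k := by
            rw [ENNReal.ofReal_mul (by positivity), ENNReal.ofReal_pow (by norm_num)]
    refine le_trans (ENNReal.tsum_le_tsum hterm) ?_
    rw [ENNReal.tsum_mul_left, ENNReal.tsum_geometric]
    have h2 : (ENNReal.ofReal 2⁻¹) = 2⁻¹ := by
      rw [ENNReal.ofReal_inv_of_pos two_pos]
      norm_num
    rw [h2, ENNReal.one_sub_inv_two, inv_inv]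
    rw [show (2 : ℝ≥0∞) = ENNReal.ofReal 2 by simp]
    rw [← ENNReal.ofReal_mul (by positivity)]
    apply ENNReal.ofReal_le_ofReal
    nlinarith [mul_nonneg hM hr.le]
  · -- far case
    have hwp : (0:ℝ) < ‖w‖ := by linarith
    have hw0 : w ≠ 0 := norm_pos_iff.mp hwp
    have hwr : (0:ℝ) < ‖w‖ - r := by linarith
    set s₀ : ℝ := (‖w‖ + r)⁻¹ with hs₀
    have hs₀p : (0:ℝ) < s₀ := by positivity
    set ρ : ℝ := r / (‖w‖ * (‖w‖ - r)) with hρ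
    have hρp : (0:ℝ) < ρ := by positivity
    have himg : (fun z : ℂ => z⁻¹) '' (Γ \ {0}) ∩ ball w r =
        (fun z : ℂ => z⁻¹) '' ((Γ \ {0}) ∩ (fun z : ℂ => z⁻¹) ⁻¹' ball w r) :=
      (Set.image_inter_preimage _ _ _).symm
    set S := (Γ \ {0}) ∩ (fun z : ℂ => z⁻¹) ⁻¹' ball w r with hS
    have hSprop : ∀ z ∈ S, z ≠ 0 ∧ s₀ ≤ ‖z‖ ∧ z ∈ ball (w⁻¹) ρ := by
      rintro z ⟨⟨hzΓ, hz0⟩, hzb⟩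
      simp only [Set.mem_singleton_iff] at hz0
      have hzn : (0:ℝ) < ‖z‖ := norm_pos_iff.mpr hz0
      simp only [Set.mem_preimage, mem_ball, dist_eq_norm] at hzb
      have hub : ‖z‖⁻¹ < ‖w‖ + r := by
        have h1 : ‖z⁻¹‖ ≤ ‖z⁻¹ - w‖ + ‖w‖ := by simpa using norm_add_le (z⁻¹ - w) w
        rw [norm_inv] at h1; linarith
      have hlb : ‖w‖ - r < ‖z‖⁻¹ := by
        have h1 : ‖w‖ - ‖z⁻¹‖ ≤ ‖z⁻¹ - w‖ := by
          rw [norm_sub_rev]; exact norm_sub_norm_le _ _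
        rw [norm_inv] at h1; linarith
      have hzd : ‖z‖ * (‖w‖ - r) < 1 := by
        have := mul_lt_mul_of_pos_left hlb hzn
        rw [mul_inv_cancel₀ hzn.ne'] at this
        exact this
      refine ⟨hz0, ?_, ?_⟩
      · rw [hs₀, inv_eq_one_div, div_le_iff₀ (by positivity)]
        have := mul_lt_mul_of_pos_left hub hzn
        rw [mul_inv_cancel₀ hzn.ne'] at this
        linarith [this]
      · rw [mem_ball, dist_eq_norm]
        have heq : z - w⁻¹ = -(z * (z⁻¹ - w)) / w := by
          field_simp
          ring
        rw [heq, norm_div, norm_neg, norm_mul]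
        rw [hρ, div_lt_div_iff₀ hwp (by positivity)]
        calc ‖z‖ * ‖z⁻¹ - w‖ * (‖w‖ * (‖w‖ - r))
            ≤ ‖z‖ * r * (‖w‖ * (‖w‖ - r)) := by
              gcongr
          _ = (‖z‖ * (‖w‖ - r)) * (r * ‖w‖) := by ring
          _ < 1 * (r * ‖w‖) := by
              apply mul_lt_mul_of_pos_right hzd (by positivity)
          _ = r * ‖w‖ := one_mul _
    have hlip : LipschitzOnWith ((s₀⁻¹ * s₀⁻¹).toNNReal) (fun z : ℂ => z⁻¹) S := by
      apply (lipOn_inv hs₀p).mono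
      intro z hz
      exact (hSprop z hz).2.1
    rw [himg]
    refine le_trans (hlip.hausdorffMeasure_image_le zero_le_one) ?_
    have hmeas : μH[1] S ≤ ENNReal.ofReal (M * ρ) := by
      refine le_trans (measure_mono ?_) (h w⁻¹ ρ hρp)
      rintro z hz
      exact ⟨hz.1.1, (hSprop z hz).2.2⟩
    calc ((((s₀⁻¹ * s₀⁻¹).toNNReal : ℝ≥0∞)) ^ (1:ℝ)) * μH[1] S
        ≤ ENNReal.ofReal (s₀⁻¹ * s₀⁻¹) * ENNReal.ofReal (M * ρ) := by
          rw [ENNReal.rpow_one]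
          exact mul_le_mul_right hmeas _
      _ = ENNReal.ofReal ((s₀⁻¹ * s₀⁻¹) * (M * ρ)) := by
          rw [← ENNReal.ofReal_mul (by positivity)]
      _ ≤ ENNReal.ofReal (12 * M * r) := by
          apply ENNReal.ofReal_le_ofReal
          rw [hs₀, inv_inv, hρ]
          rw [div_eq_mul_inv, show (‖w‖ + r) * (‖w‖ + r) * (M * (r * (‖w‖ * (‖w‖ - r))⁻¹))
            = ((‖w‖ + r) * (‖w‖ + r) * M * r) * (‖w‖ * (‖w‖ - r))⁻¹ by ring,
            ← div_eq_mul_inv, div_le_iff₀ (by positivity)]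
          nlinarith [mul_nonneg (mul_nonneg hM hr.le) (sub_nonneg.mpr hw.le),
            mul_nonneg hM hr.le, mul_pos hr hr, sq_nonneg (‖w‖ - 2*r)]

lemma subset_reg {Γ Γ' : Set ℂ} {M : ℝ} (hs : Γ' ⊆ Γ) (h : IsAhlforsRegular Γ M) :
    IsAhlforsRegular Γ' M := fun z r hr =>
  le_trans (measure_mono (Set.inter_subset_inter_left _ hs)) (h z r hr)

lemma mobius_aux (Γ : Set ℂ) (M : ℝ) (a b c d : ℂ) (hM : 0 ≤ M)
    (hreg : IsAhlforsRegular Γ M) (hT : a * d - b * c = 1) :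
    IsAhlforsRegular (mobiusImage a b c d Γ) (12 * M) := by
  rcases eq_or_ne c 0 with hc | hc
  · -- affine case
    subst hc
    have had : a * d = 1 := by linear_combination hT
    have hd : d ≠ 0 := by
      intro h0; rw [h0, mul_zero] at had; exact one_ne_zero had.symm
    have ha : a ≠ 0 := by
      intro h0; rw [h0, zero_mul] at had; exact one_ne_zero had.symm
    have hset : {z ∈ Γ | (0:ℂ) * z + d ≠ 0} = Γ := by
      ext z; simp [hd]
    have himg : mobiusImage a b 0 d Γ = (fun z => (a/d) * z + b/d) '' Γ := by
      rw [mobiusImage, hset]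
      apply Set.image_congr
      intro z _
      field_simp
      simp [hd]
    rw [himg]
    intro z r hr
    refine le_trans (affine_reg (by simp [ha, hd]) hreg z r hr) ?_
    apply ENNReal.ofReal_le_ofReal
    nlinarith [mul_nonneg hM hr.le]
  · -- genuine Möbius: a/c - c⁻¹ * (c z + d)⁻¹
    have h1 : ((fun z => c*z+d) '' Γ) \ {0} = (fun z => c*z+d) '' {z ∈ Γ | c*z+d ≠ 0} := by
      ext u
      simp only [Set.mem_diff, Set.mem_image, Set.mem_singleton_iff, Set.mem_setOf_eq]
      constructor
      · rintro ⟨⟨z, hz, rfl⟩, h0⟩; exact ⟨z, ⟨hz, h0⟩, rfl⟩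
      · rintro ⟨z, ⟨hz, h0⟩, rfl⟩; exact ⟨⟨z, hz, rfl⟩, h0⟩
    have himg : mobiusImage a b c d Γ =
        (fun w => (-c⁻¹) * w + a/c) '' ((fun z : ℂ => z⁻¹) '' (((fun z => c*z + d) '' Γ) \ {0})) := by
      rw [h1, ← Set.image_comp, ← Set.image_comp, mobiusImage]
      apply Set.image_congr
      rintro z ⟨_, hz0⟩
      simp only [Function.comp_apply]
      have hz0' : z * c + d ≠ 0 := by rwa [mul_comm z c]
      field_simp
      linear_combination -hT
    rw [himg]
    exact affine_reg (by simp [hc]) (inv_reg hM (affine_reg (β := d) hc hreg))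
/-- The image of an `M`-regular rectifiable curve under a Möbius transformation (minus the
point at infinity) is `12M`-regular. -/
theorem mobiusImage_ahlforsRegular (Γ : Set ℂ) (M : ℝ) (a b c d : ℂ)
    (hΓ : IsRectifiableCurve Γ) (hreg : IsAhlforsRegular Γ M) (hT : a * d - b * c = 1) :
    IsAhlforsRegular (mobiusImage a b c d Γ) (12 * M) := by
  rcases le_or_gt 0 M with hM | hM
  · exact mobius_aux Γ M a b c d hM hreg hT
  · intro z r hr
    have h0 : IsAhlforsRegular Γ 0 := by
      intro z' r' hr'
      refine le_trans (hreg z' r' hr') (ENNReal.ofReal_le_ofReal ?_)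
      nlinarith
    refine le_trans (mobius_aux Γ 0 a b c d le_rfl h0 hT z r hr) ?_
    rw [mul_zero, zero_mul, ENNReal.ofReal_zero]
    exact zero_le'

end
end

section
/- Let Γ be an M-regular rectifiable curve in ℂ. Then for every Möbius transformation T, the spherical length of T(Γ) is at most 60M, i.e., ∫_{T(Γ)∖{∞}} |dz|/(1+|z|²) ≤ 60M. -/
open MeasureTheory Metric Set Real ENNReal

noncomputable section

/-- The spherical length of the image of an `M`-regular rectifiable curve under any Möbius
transformation is at most `60 M`. -/
theorem sphericalLength_mobiusImage_le (Γ : Set ℂ) (M : ℝ)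
    (hΓ : IsRectifiableCurve Γ) (hreg : IsAhlforsRegular Γ M) :
    ∀ a b c d : ℂ, a * d - b * c = 1 →
      sphericalLength (mobiusImage a b c d Γ) ≤ ENNReal.ofReal (60 * M) := by
  obtain ⟨⟨γ, hγc, hγim⟩, -⟩ := hΓ
  have hΓm : MeasurableSet Γ := hγim ▸ (isCompact_Icc.image hγc).measurableSet
  intro a b c d hdet
  set T : ℂ → ℂ := fun z => (a * z + b) / (c * z + d) with hT
  set q : ℂ → ℝ := fun z => Complex.normSq (a * z + b) + Complex.normSq (c * z + d) with hqdef
  set α : ℝ := Complex.normSq a + Complex.normSq c with hαdef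
  set β : ℂ := (starRingEnd ℂ) a * b + (starRingEnd ℂ) c * d with hβdef
  have hα0 : 0 < α := by
    rcases eq_or_ne a 0 with ha | ha
    · rcases eq_or_ne c 0 with hc | hc
      · rw [ha, hc] at hdet; simp at hdet
      · have := Complex.normSq_pos.2 hc
        have := Complex.normSq_nonneg a; rw [hαdef]; linarith
    · have := Complex.normSq_pos.2 ha
      have := Complex.normSq_nonneg c; rw [hαdef]; linarith
  have hkey : ∀ z : ℂ, α * q z = Complex.normSq ((α : ℂ) * z + β) + 1 := by
    intro z
    have hdetc : (starRingEnd ℂ) a * (starRingEnd ℂ) d - (starRingEnd ℂ) b * (starRingEnd ℂ) c = 1 := by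
      have := congrArg (starRingEnd ℂ) hdet
      simpa [map_sub, map_mul] using this
    have e : ∀ x : ℂ, ((Complex.normSq x : ℝ) : ℂ) = x * (starRingEnd ℂ) x :=
      fun x => (Complex.mul_conj x).symm
    have key : ((α * q z : ℝ) : ℂ) = ((Complex.normSq ((α : ℂ) * z + β) + 1 : ℝ) : ℂ) := by
      rw [hαdef, hqdef, hβdef]
      push_cast [e]
      simp only [map_add, map_mul, Complex.conj_conj, Complex.conj_ofReal, map_one]
      push_cast [e]
      linear_combination ((starRingEnd ℂ) a * (starRingEnd ℂ) d - (starRingEnd ℂ) b * (starRingEnd ℂ) c) * hdet + hdetc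
    exact_mod_cast key
  have hq1 : ∀ z : ℂ, 1 ≤ α * q z := by
    intro z
    have := hkey z
    have := Complex.normSq_nonneg ((α : ℂ) * z + β)
    linarith
  set z₀ : ℂ := -β / (α : ℂ) with hz₀def
  set P : ℕ → ℤ → Set ℂ := fun j k =>
    {z | z ∈ Γ ∧ (2:ℝ) ^ k ≤ ‖c * z + d‖ ∧ ‖c * z + d‖ < 2 ^ (k + 1) ∧
      (2:ℝ) ^ (2 * j) / α ≤ q z ∧ q z < (2:ℝ) ^ (2 * j + 2) / α} with hPdef
  -- covering
  have hcover : mobiusImage a b c d Γ ⊆ ⋃ p : ℕ × ℤ, T '' P p.1 p.2 := by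
    rintro w ⟨z, ⟨hzΓ, hz0⟩, rfl⟩
    obtain ⟨k, hk1, hk2⟩ := exists_mem_Ico_zpow (norm_pos_iff.mpr hz0) one_lt_two
    have hαq1 : (1:ℝ) ≤ α * q z := hq1 z
    obtain ⟨n, hn1, hn2⟩ := exists_mem_Ico_zpow (lt_of_lt_of_le one_pos hαq1)
      (by norm_num : (1:ℝ) < 4)
    have hn0 : 0 ≤ n := by
      by_contra h
      push_neg at h
      have h1 : n + 1 ≤ 0 := by omega
      have : (4:ℝ) ^ (n + 1) ≤ 4 ^ (0:ℤ) := zpow_le_zpow_right₀ (by norm_num) h1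
      simp only [zpow_zero] at this
      linarith
    set j : ℕ := n.toNat with hjdef
    have hjn : (j : ℤ) = n := Int.toNat_of_nonneg hn0
    have h4j : (4:ℝ) ^ n = (2:ℝ) ^ (2 * j) := by
      rw [← hjn, zpow_natCast, show (4:ℝ) = 2 ^ 2 by norm_num, ← pow_mul, mul_comm]
    have h4j' : (4:ℝ) ^ (n + 1) = (2:ℝ) ^ (2 * j + 2) := by
      rw [← hjn, show (j:ℤ) + 1 = ((j + 1 : ℕ) : ℤ) by push_cast; ring, zpow_natCast,
        show (4:ℝ) = 2 ^ 2 by norm_num, ← pow_mul]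
      ring_nf
    refine mem_iUnion.2 ⟨(j, k), ⟨z, ⟨hzΓ, hk1, hk2, ?_, ?_⟩, rfl⟩⟩
    · rw [div_le_iff₀ hα0]; rw [h4j] at hn1; linarith [hn1]
    · rw [lt_div_iff₀ hα0]; rw [h4j'] at hn2; linarith [hn2]
  -- per-piece bound
  have hpiece : ∀ (j : ℕ) (k : ℤ),
      (∫⁻ w in T '' P j k, ENNReal.ofReal ((1 + ‖w‖ ^ 2)⁻¹) ∂μH[1]) ≤
        ENNReal.ofReal (4 * α * ((2:ℝ) ^ (2 * j))⁻¹) * μH[1] (P j k) := by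
    intro j k
    set Cw : ℝ := α * (2:ℝ) ^ (2 * k + 2) * ((2:ℝ) ^ (2 * j))⁻¹ with hCwdef
    have hCw0 : 0 ≤ Cw := by positivity
    have hne : ∀ z ∈ P j k, c * z + d ≠ 0 := by
      intro z hz
      have habs : (0:ℝ) < ‖c * z + d‖ := lt_of_lt_of_le (zpow_pos two_pos k) hz.2.1
      exact norm_pos_iff.1 habs
    -- weight bound on the image
    have hw : ∀ w ∈ T '' P j k, ENNReal.ofReal ((1 + ‖w‖ ^ 2)⁻¹) ≤ ENNReal.ofReal Cw := by
      rintro w ⟨z, hz, rfl⟩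
      apply ENNReal.ofReal_le_ofReal
      obtain ⟨hzΓ, hk1, hk2, hj1, hj2⟩ := hz
      have hz0 : c * z + d ≠ 0 := hne z ⟨hzΓ, hk1, hk2, hj1, hj2⟩
      have hns : Complex.normSq (c * z + d) ≠ 0 := by
        simpa [Complex.normSq_eq_zero] using hz0
      have hnspos : 0 < Complex.normSq (c * z + d) := Complex.normSq_pos.2 hz0
      have hqpos : 0 < q z := lt_of_lt_of_le (by positivity) hj1
      have hval : 1 + ‖T z‖ ^ 2 = q z / Complex.normSq (c * z + d) := by
        have h1 : ‖T z‖ ^ 2 = Complex.normSq (a * z + b) / Complex.normSq (c * z + d) := by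
          rw [hT]
          simp only [Complex.sq_norm, Complex.normSq_div]
        rw [h1, hqdef]
        simp only [add_div, div_self hns]
        ring
      rw [hval, inv_div]
      have hnslt : Complex.normSq (c * z + d) < (2:ℝ) ^ (2 * k + 2) := by
        rw [← Complex.sq_norm]
        have h2 : ((2:ℝ) ^ (k + 1)) ^ 2 = (2:ℝ) ^ (2 * k + 2) := by
          rw [← zpow_natCast ((2:ℝ) ^ (k + 1)) 2, ← zpow_mul]
          ring_nf
        rw [← h2, sq, sq]
        exact mul_lt_mul'' hk2 hk2 (norm_nonneg _) (norm_nonneg _)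
      calc Complex.normSq (c * z + d) / q z
          ≤ (2:ℝ) ^ (2 * k + 2) / ((2:ℝ) ^ (2 * j) / α) :=
            div_le_div₀ (by positivity) (le_of_lt hnslt) (by positivity) hj1
        _ = Cw := by rw [hCwdef]; field_simp
    -- Lipschitz bound on the piece
    set K : NNReal := ((2:ℝ) ^ (-(2 * k))).toNNReal with hKdef
    have hKcoe : (K : ℝ) = (2:ℝ) ^ (-(2 * k)) := Real.coe_toNNReal _ (le_of_lt (zpow_pos two_pos _))
    have hLip : LipschitzOnWith K T (P j k) := by
      apply LipschitzOnWith.of_dist_le_mul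
      intro x hx y hy
      have hx0 := hne x hx
      have hy0 := hne y hy
      have hdiff : T x - T y = (x - y) / ((c * x + d) * (c * y + d)) := by
        rw [hT]
        show (a * x + b) / (c * x + d) - (a * y + b) / (c * y + d) = _
        rw [div_sub_div _ _ hx0 hy0]
        congr 1
        linear_combination (x - y) * hdet
      rw [Complex.dist_eq, Complex.dist_eq, hdiff, norm_div, norm_mul, hKcoe]
      have hprod : (2:ℝ) ^ k * (2:ℝ) ^ k ≤ ‖c * x + d‖ * ‖c * y + d‖ :=
        mul_le_mul hx.2.1 hy.2.1 (le_of_lt (zpow_pos two_pos k)) (norm_nonneg _)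
      have h2 : ‖x - y‖ / (‖c * x + d‖ * ‖c * y + d‖) ≤
          ‖x - y‖ / ((2:ℝ) ^ k * (2:ℝ) ^ k) := by
        gcongr
      refine h2.trans (le_of_eq ?_)
      have h3 : (2:ℝ) ^ k * (2:ℝ) ^ k = (2:ℝ) ^ (2 * k) := by
        rw [← zpow_add₀ (two_ne_zero : (2:ℝ) ≠ 0)]; ring_nf
      rw [h3, zpow_neg, div_eq_mul_inv, mul_comm]
    have him : μH[1] (T '' P j k) ≤ ENNReal.ofReal ((2:ℝ) ^ (-(2 * k))) * μH[1] (P j k) := by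
      calc μH[1] (T '' P j k) ≤ (K : ℝ≥0∞) ^ (1:ℝ) * μH[1] (P j k) :=
            hLip.hausdorffMeasure_image_le zero_le_one
        _ = ENNReal.ofReal ((2:ℝ) ^ (-(2 * k))) * μH[1] (P j k) := by
            rw [ENNReal.rpow_one]; rfl
    calc (∫⁻ w in T '' P j k, ENNReal.ofReal ((1 + ‖w‖ ^ 2)⁻¹) ∂μH[1])
        ≤ ∫⁻ _ in T '' P j k, ENNReal.ofReal Cw ∂μH[1] := setLIntegral_mono measurable_const hw
      _ = ENNReal.ofReal Cw * μH[1] (T '' P j k) := setLIntegral_const _ _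
      _ ≤ ENNReal.ofReal Cw * (ENNReal.ofReal ((2:ℝ) ^ (-(2 * k))) * μH[1] (P j k)) :=
          mul_le_mul_right him _
      _ = ENNReal.ofReal (4 * α * ((2:ℝ) ^ (2 * j))⁻¹) * μH[1] (P j k) := by
          rw [← mul_assoc, ← ENNReal.ofReal_mul hCw0]
          congr 2
          have h24 : (2:ℝ) ^ (2 * k + 2) * (2:ℝ) ^ (-(2 * k)) = 4 := by
            rw [← zpow_add₀ (two_ne_zero : (2:ℝ) ≠ 0)]; norm_num
          have h25 : Cw * (2:ℝ) ^ (-(2 * k)) =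
              α * ((2:ℝ) ^ (2 * k + 2) * (2:ℝ) ^ (-(2 * k))) * ((2:ℝ) ^ (2 * j))⁻¹ := by
            rw [hCwdef]; ring
          rw [h25, h24]; ring
  -- sum over k for fixed j
  have hsumk : ∀ j : ℕ, (∑' k : ℤ, μH[1] (P j k)) ≤
      ENNReal.ofReal (M * ((2:ℝ) ^ (j + 1) / α)) := by
    intro j
    have hmeas : ∀ k : ℤ, MeasurableSet (P j k) := by
      intro k
      have haff : ∀ u v : ℂ, Continuous fun z : ℂ => u * z + v := fun u v =>
        (continuous_const.mul continuous_id).add continuous_const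
      have h1 : Continuous fun z : ℂ => ‖c * z + d‖ :=
        continuous_norm.comp (haff c d)
      have h2 : Continuous q := by
        rw [hqdef]
        exact (Complex.continuous_normSq.comp (haff a b)).add
          (Complex.continuous_normSq.comp (haff c d))
      have : P j k = Γ ∩ ((fun z : ℂ => ‖c * z + d‖) ⁻¹'
          Ico ((2:ℝ) ^ k) ((2:ℝ) ^ (k + 1))) ∩ (q ⁻¹' Ico ((2:ℝ) ^ (2 * j) / α) ((2:ℝ) ^ (2 * j + 2) / α)) := by
        ext z
        simp only [hPdef, mem_setOf_eq, mem_inter_iff, mem_preimage, mem_Ico]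
        tauto
      rw [this]
      exact (hΓm.inter (h1.measurable measurableSet_Ico)).inter (h2.measurable measurableSet_Ico)
    have hdisj : Pairwise (Function.onFun Disjoint fun k => P j k) := by
      intro k k' hne'
      simp only [Function.onFun]
      rw [Set.disjoint_left]
      rintro z ⟨-, h1, h2, -⟩ ⟨-, h1', h2', -⟩
      apply hne'
      have hkk : k < k' + 1 := by
        have := lt_of_le_of_lt h1 h2'
        exact (zpow_lt_zpow_iff_right₀ (one_lt_two : (1:ℝ) < 2)).1 this
      have hkk' : k' < k + 1 := by
        have := lt_of_le_of_lt h1' h2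
        exact (zpow_lt_zpow_iff_right₀ (one_lt_two : (1:ℝ) < 2)).1 this
      omega
    rw [← measure_iUnion hdisj hmeas]
    refine le_trans (measure_mono ?_) (hreg z₀ ((2:ℝ) ^ (j + 1) / α) (by positivity))
    rintro z hz
    simp only [mem_iUnion] at hz
    obtain ⟨k, hzΓ, -, -, -, hj2⟩ := hz
    refine ⟨hzΓ, ?_⟩
    have h1 : Complex.normSq ((α : ℂ) * z + β) < (2:ℝ) ^ (2 * j + 2) := by
      have hk := hkey z
      have : α * q z < (2:ℝ) ^ (2 * j + 2) := by
        have := mul_lt_mul_of_pos_left hj2 hα0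
        rwa [mul_div_cancel₀ _ (ne_of_gt hα0)] at this
      linarith
    have h2 : ‖(α : ℂ) * z + β‖ < (2:ℝ) ^ (j + 1) := by
      apply lt_of_pow_lt_pow_left₀ 2 (by positivity)
      rw [Complex.sq_norm]
      calc Complex.normSq ((α : ℂ) * z + β) < (2:ℝ) ^ (2 * j + 2) := h1
        _ = ((2:ℝ) ^ (j + 1)) ^ 2 := by rw [← pow_mul]; ring_nf
    have hdz : dist z z₀ = ‖(α : ℂ) * z + β‖ / α := by
      rw [Complex.dist_eq, hz₀def]
      have hαc : (α : ℂ) ≠ 0 := by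
        simpa using ne_of_gt hα0
      have : z - -β / (α : ℂ) = ((α : ℂ) * z + β) / (α : ℂ) := by
        field_simp
        ring
      rw [this, norm_div, Complex.norm_real, Real.norm_eq_abs, abs_of_pos hα0]
    rw [mem_ball, hdz]
    gcongr
  -- assembling
  calc sphericalLength (mobiusImage a b c d Γ)
      ≤ ∫⁻ w in ⋃ p : ℕ × ℤ, T '' P p.1 p.2, ENNReal.ofReal ((1 + ‖w‖ ^ 2)⁻¹) ∂μH[1] :=
        lintegral_mono_set hcover
    _ ≤ ∑' p : ℕ × ℤ, ∫⁻ w in T '' P p.1 p.2, ENNReal.ofReal ((1 + ‖w‖ ^ 2)⁻¹) ∂μH[1] :=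
        lintegral_iUnion_le _ _
    _ ≤ ∑' p : ℕ × ℤ, ENNReal.ofReal (4 * α * ((2:ℝ) ^ (2 * p.1))⁻¹) * μH[1] (P p.1 p.2) :=
        ENNReal.tsum_le_tsum fun p => hpiece p.1 p.2
    _ = ∑' j : ℕ, ∑' k : ℤ, ENNReal.ofReal (4 * α * ((2:ℝ) ^ (2 * j))⁻¹) * μH[1] (P j k) :=
        ENNReal.tsum_prod (f := fun (j : ℕ) (k : ℤ) =>
          ENNReal.ofReal (4 * α * ((2:ℝ) ^ (2 * j))⁻¹) * μH[1] (P j k))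
    _ = ∑' j : ℕ, ENNReal.ofReal (4 * α * ((2:ℝ) ^ (2 * j))⁻¹) * ∑' k : ℤ, μH[1] (P j k) := by
        congr 1
        ext j
        rw [ENNReal.tsum_mul_left]
    _ ≤ ∑' j : ℕ, ENNReal.ofReal (4 * α * ((2:ℝ) ^ (2 * j))⁻¹) *
          ENNReal.ofReal (M * ((2:ℝ) ^ (j + 1) / α)) :=
        ENNReal.tsum_le_tsum fun j => mul_le_mul_right (hsumk j) _
    _ = ∑' j : ℕ, ENNReal.ofReal (8 * M * ((2:ℝ)⁻¹) ^ j) := by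
        congr 1
        ext j
        rw [← ENNReal.ofReal_mul (by positivity)]
        congr 1
        have h2j : (2:ℝ) ^ (2 * j) = (2:ℝ) ^ j * (2:ℝ) ^ j := by rw [← pow_add]; ring_nf
        rw [h2j]
        field_simp
        rw [one_div, inv_pow]
        field_simp
        ring
    _ ≤ ENNReal.ofReal (60 * M) := by
        rcases le_or_gt 0 M with hM | hM
        · have hterm : ∀ j : ℕ, ENNReal.ofReal (8 * M * ((2:ℝ)⁻¹) ^ j) =
              ENNReal.ofReal (8 * M) * (2⁻¹ : ℝ≥0∞) ^ j := by
            intro j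
            rw [ENNReal.ofReal_mul (by positivity), ENNReal.ofReal_pow (by norm_num)]
            congr 2
            rw [ENNReal.ofReal_inv_of_pos two_pos]
            norm_num
          rw [tsum_congr hterm, ENNReal.tsum_mul_left, ENNReal.tsum_geometric,
            ENNReal.one_sub_inv_two, inv_inv]
          calc ENNReal.ofReal (8 * M) * 2 = ENNReal.ofReal (8 * M) + ENNReal.ofReal (8 * M) := by
                ring
            _ = ENNReal.ofReal (8 * M + 8 * M) := (ENNReal.ofReal_add (by positivity) (by positivity)).symm
            _ ≤ ENNReal.ofReal (60 * M) := ENNReal.ofReal_le_ofReal (by linarith)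
        · have hterm : ∀ j : ℕ, ENNReal.ofReal (8 * M * ((2:ℝ)⁻¹) ^ j) = 0 := by
            intro j
            rw [ENNReal.ofReal_eq_zero]
            have h1 : (0:ℝ) < ((2:ℝ)⁻¹) ^ j := by positivity
            nlinarith
          rw [tsum_congr hterm, tsum_zero]
          exact zero_le


end
end

section
/- Let Γ be a rectifiable curve in ℂ and suppose there is K > 0 such that the spherical length of T(Γ) is at most K for every Möbius transformation T. Then for every w ∈ ℂ ∖ Γ, length(M_w(Γ)) = ∫_Γ |z − w|⁻² |dz| ≤ 2K/d(w,Γ), where M_w(z) = 1/(z − w) and d(w,Γ) is the distance from w to Γ. -/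
open MeasureTheory Metric Set Real ENNReal

noncomputable section

/-- If the spherical length of every Möbius image of a rectifiable curve `Γ` is at most `K`,
then `length(M_w(Γ)) = ∫_Γ |z-w|⁻² |dz| ≤ 2K / d(w,Γ)` for every `w ∉ Γ`. -/
theorem inversion_length_le_of_sphericalLength_bounded (Γ : Set ℂ) (K : ℝ)
    (hΓ : IsRectifiableCurve Γ) (hK : 0 < K)
    (hs : ∀ a b c d : ℂ, a * d - b * c = 1 →
      sphericalLength (mobiusImage a b c d Γ) ≤ ENNReal.ofReal K) :
    ∀ w : ℂ, w ∉ Γ →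
      ∫⁻ z in Γ, ENNReal.ofReal ((‖z - w‖ ^ 2)⁻¹) ∂μH[1] ≤
        ENNReal.ofReal (2 * K / Metric.infDist w Γ) := by
  obtain ⟨⟨γ, hγc, hγim⟩, _hfin⟩ := hΓ
  have hΓcpt : IsCompact Γ := hγim ▸ isCompact_Icc.image hγc
  have hΓne : Γ.Nonempty := hγim ▸ (Set.nonempty_Icc.2 (by norm_num : (0:ℝ) ≤ 1)).image γ
  have hΓmeas : MeasurableSet Γ := hΓcpt.measurableSet
  intro w hw
  set d := Metric.infDist w Γ with hd_def
  have hd : 0 < d := (hΓcpt.isClosed.notMem_iff_infDist_pos hΓne).1 hw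
  have hdC : (d : ℂ) ≠ 0 := Complex.ofReal_ne_zero.2 hd.ne'
  have hdist : ∀ z ∈ Γ, d ≤ ‖z - w‖ := by
    intro z hz
    have h1 : Metric.infDist w Γ ≤ dist w z := Metric.infDist_le_dist_of_mem hz
    rwa [dist_comm, dist_eq_norm] at h1
  have hwz : ∀ z ∈ Γ, w - z ≠ 0 := by
    intro z hz h
    exact hw (by rwa [sub_eq_zero.1 h])
  -- the inversion M and its image E
  set M : ℂ → ℂ := fun z => (d : ℂ) / (w - z) with hM_def
  set E : Set ℂ := M '' Γ with hE_def
  have hMnorm : ∀ z ∈ Γ, ‖M z‖ = d / ‖z - w‖ := by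
    intro z hz
    simp only [hM_def, norm_div, Complex.norm_real, Real.norm_eq_abs,
      abs_of_pos hd, norm_sub_rev w z]
  -- E as a Möbius image, and the spherical length bound
  set u : ℂ := (Real.sqrt d : ℂ) with hu_def
  have huC : u ≠ 0 := Complex.ofReal_ne_zero.2 (Real.sqrt_pos.2 hd).ne'
  have huu : u * u = (d : ℂ) := by
    rw [hu_def, ← Complex.ofReal_mul, Real.mul_self_sqrt hd.le]
  have hEmob : mobiusImage 0 u (-1/u) (w/u) Γ = E := by
    unfold mobiusImage
    have hset : {z ∈ Γ | (-1/u) * z + w/u ≠ 0} = Γ := by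
      ext z
      simp only [Set.mem_setOf_eq]
      refine ⟨fun h => h.1, fun hz => ⟨hz, ?_⟩⟩
      have h1 : (-1/u) * z + w/u = (w - z) / u := by field_simp; ring
      rw [h1]
      exact div_ne_zero (hwz z hz) huC
    rw [hset, hE_def]
    refine Set.image_congr fun z hz => ?_
    have h1 := hwz z hz
    have hden : (-1/u) * z + w/u = (w - z) / u := by field_simp; ring
    rw [hM_def, hden, zero_mul, zero_add, div_div_eq_mul_div, huu]
  have hsph : sphericalLength E ≤ ENNReal.ofReal K := by
    rw [← hEmob]
    exact hs 0 u (-1/u) (w/u) (by field_simp; ring)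
  -- E is compact, inside the closed unit disk
  have hMcont : ContinuousOn M Γ :=
    ContinuousOn.div continuousOn_const
      ((continuous_const.sub continuous_id).continuousOn) (fun z hz => hwz z hz)
  have hEcpt : IsCompact E := hΓcpt.image_of_continuousOn hMcont
  have hEmeas : MeasurableSet E := hEcpt.measurableSet
  have hEub : ∀ ζ ∈ E, ‖ζ‖ ≤ 1 := by
    rintro ζ ⟨z, hz, rfl⟩
    rw [hMnorm z hz]
    exact div_le_one_of_le₀ (hdist z hz) (norm_nonneg _)
  -- μH E ≤ 2 K
  have hμE : μH[1] E ≤ ENNReal.ofReal 2 * ENNReal.ofReal K := by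
    have hhalf : ENNReal.ofReal 2⁻¹ * μH[1] E ≤ sphericalLength E := by
      rw [← MeasureTheory.setLIntegral_const E (ENNReal.ofReal 2⁻¹)]
      refine setLIntegral_mono ?_ fun ζ hζ => ?_
      · exact (Measurable.ennreal_ofReal
          (((continuous_const.add ((continuous_norm).pow 2)).inv₀
            (fun x => (add_pos_of_pos_of_nonneg one_pos (sq_nonneg _)).ne')).measurable))
      · refine ENNReal.ofReal_le_ofReal ?_
        have h1 : (1:ℝ) + ‖ζ‖^2 ≤ 2 := by nlinarith [hEub ζ hζ, norm_nonneg ζ]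
        exact inv_anti₀ (by positivity) h1
    calc μH[1] E = ENNReal.ofReal 2 * (ENNReal.ofReal 2⁻¹ * μH[1] E) := by
            rw [← mul_assoc, ← ENNReal.ofReal_mul (by norm_num)]
            norm_num
      _ ≤ ENNReal.ofReal 2 * sphericalLength E := mul_le_mul_right hhalf _
      _ ≤ ENNReal.ofReal 2 * ENNReal.ofReal K := mul_le_mul_right hsph _
  -- main estimate for fixed q > 1
  have key : ∀ q : ℝ, 1 < q →
      ∫⁻ z in Γ, ENNReal.ofReal ((‖z - w‖ ^ 2)⁻¹) ∂μH[1] ≤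
        ENNReal.ofReal (2 * K * q ^ 2 / d) := by
    intro q hq
    have hq0 : (0:ℝ) < q := lt_trans one_pos hq
    set A : ℕ → Set ℂ := fun n => {z : ℂ | d * q^n ≤ ‖z - w‖ ∧ ‖z - w‖ < d * q^(n+1)}
      with hA_def
    set B : ℕ → Set ℂ := fun n => {ζ : ℂ | (q^(n+1))⁻¹ < ‖ζ‖ ∧ ‖ζ‖ ≤ (q^n)⁻¹} with hB_def
    have hnc : Continuous fun z : ℂ => ‖z - w‖ := (continuous_id.sub continuous_const).norm
    have hAmeas : ∀ n, MeasurableSet (A n) := by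
      intro n
      rw [hA_def]
      simp only [Set.setOf_and]
      exact (measurableSet_le measurable_const hnc.measurable).inter
        (measurableSet_lt hnc.measurable measurable_const)
    have hBmeas : ∀ n, MeasurableSet (B n) := by
      intro n
      rw [hB_def]
      simp only [Set.setOf_and]
      exact (measurableSet_lt measurable_const continuous_norm.measurable).inter
        (measurableSet_le continuous_norm.measurable measurable_const)
    -- Γ is covered by the annuli
    have hcov : Γ ⊆ ⋃ n, A n := by
      intro z hz
      have h1 := hdist z hz
      have hP : ∃ n : ℕ, ‖z - w‖ < d * q^(n+1) := by
        obtain ⟨m, hm⟩ := pow_unbounded_of_one_lt (‖z - w‖ / d) hq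
        refine ⟨m, ?_⟩
        have h2 : ‖z - w‖ < d * q^m := by
          rw [div_lt_iff₀ hd] at hm; linarith [hm]
        have h3 : d * q^m ≤ d * q^(m+1) :=
          mul_le_mul_of_nonneg_left (pow_le_pow_right₀ hq.le (Nat.le_succ m)) hd.le
        linarith
      refine Set.mem_iUnion.2 ⟨Nat.find hP, ?_, Nat.find_spec hP⟩
      rcases Nat.eq_zero_or_pos (Nat.find hP) with h0 | hpos
      · rw [h0]; simpa using h1
      · obtain ⟨k, hk⟩ := Nat.exists_eq_succ_of_ne_zero hpos.ne'
        have h2 := Nat.find_min hP (m := k) (by omega)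
        push_neg at h2
        rw [hk]
        exact h2
    have hΓcov : Γ = ⋃ n, Γ ∩ A n := by
      rw [← Set.inter_iUnion, Set.inter_eq_left.2 hcov]
    -- disjointness
    have hAdisj' : ∀ m n : ℕ, m < n → Disjoint (A m) (A n) := by
      intro m n hmn
      refine Set.disjoint_left.2 fun z hzm hzn => ?_
      have h1 : d * q^(m+1) ≤ d * q^n :=
        mul_le_mul_of_nonneg_left (pow_le_pow_right₀ hq.le (by omega)) hd.le
      have := hzm.2
      have := hzn.1
      linarith
    have hAdisj : Pairwise (Function.onFun Disjoint fun n => Γ ∩ A n) := by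
      intro m n hmn
      rcases hmn.lt_or_gt with h | h
      · exact ((hAdisj' m n h).mono Set.inter_subset_right Set.inter_subset_right)
      · exact ((hAdisj' n m h).mono Set.inter_subset_right Set.inter_subset_right).symm
    have hBdisj : Pairwise (Function.onFun Disjoint fun n => E ∩ B n) := by
      have hgen : ∀ m n : ℕ, m < n → Disjoint (B m) (B n) := by
        intro m n hmn
        refine Set.disjoint_left.2 fun ζ hζm hζn => ?_
        have h1 : (q^n)⁻¹ ≤ (q^(m+1))⁻¹ :=
          inv_anti₀ (by positivity) (pow_le_pow_right₀ hq.le (by omega))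
        have := hζm.1
        have := hζn.2
        linarith
      intro m n hmn
      rcases hmn.lt_or_gt with h | h
      · exact ((hgen m n h).mono Set.inter_subset_right Set.inter_subset_right)
      · exact ((hgen n m h).mono Set.inter_subset_right Set.inter_subset_right).symm
    -- per-annulus estimate
    have pern : ∀ n : ℕ, ∫⁻ z in Γ ∩ A n, ENNReal.ofReal ((‖z - w‖ ^ 2)⁻¹) ∂μH[1]
        ≤ ENNReal.ofReal (q^2 / d) * μH[1] (E ∩ B n) := by
      intro n
      have hrn : (0:ℝ) < d * q^n := by positivity
      have step1 : ∫⁻ z in Γ ∩ A n, ENNReal.ofReal ((‖z - w‖ ^ 2)⁻¹) ∂μH[1]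
          ≤ ENNReal.ofReal (((d * q^n)^2)⁻¹) * μH[1] (Γ ∩ A n) := by
        rw [← MeasureTheory.setLIntegral_const (Γ ∩ A n) (ENNReal.ofReal (((d * q^n)^2)⁻¹))]
        refine setLIntegral_mono measurable_const fun z hz => ?_
        refine ENNReal.ofReal_le_ofReal ?_
        have h1 : d * q^n ≤ ‖z - w‖ := hz.2.1
        exact inv_anti₀ (by positivity) (by nlinarith)
      -- the inverse map g is Lipschitz on B n
      set g : ℂ → ℂ := fun ζ => w - (d:ℂ)/ζ with hg_def
      set L : NNReal := Real.toNNReal (d * (q^(n+1))^2) with hL_def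
      have hglip : LipschitzOnWith L g (E ∩ B n) := by
        rw [lipschitzOnWith_iff_dist_le_mul]
        intro x hx y hy
        have hc : (0:ℝ) < q^(n+1) := by positivity
        have hxn : (q^(n+1))⁻¹ ≤ ‖x‖ := le_of_lt hx.2.1
        have hyn : (q^(n+1))⁻¹ ≤ ‖y‖ := le_of_lt hy.2.1
        have hxpos : (0:ℝ) < ‖x‖ := lt_of_lt_of_le (by positivity) hxn
        have hypos : (0:ℝ) < ‖y‖ := lt_of_lt_of_le (by positivity) hyn
        have hx0 : x ≠ 0 := norm_pos_iff.1 hxpos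
        have hy0 : y ≠ 0 := norm_pos_iff.1 hypos
        have hsub : g x - g y = (d:ℂ) * (x - y) / (x * y) := by
          rw [hg_def]; field_simp; ring
        rw [dist_eq_norm, dist_eq_norm, hsub, norm_div, norm_mul, norm_mul,
          Complex.norm_real, Real.norm_eq_abs, abs_of_pos hd]
        have hLcoe : (L : ℝ) = d * (q^(n+1))^2 :=
          Real.coe_toNNReal _ (by positivity)
        rw [hLcoe, div_le_iff₀ (by positivity)]
        have hab : (q^(n+1))⁻¹ * (q^(n+1))⁻¹ ≤ ‖x‖ * ‖y‖ :=
          mul_le_mul hxn hyn (by positivity) hxpos.le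
        have hone : (q^(n+1))^2 * ((q^(n+1))⁻¹ * (q^(n+1))⁻¹) = 1 := by
          field_simp
        nlinarith [norm_nonneg (x - y), mul_nonneg hd.le (norm_nonneg (x - y)),
          mul_le_mul_of_nonneg_left hab (by positivity : (0:ℝ) ≤ (q^(n+1))^2)]
      -- Γ ∩ A n is inside g '' (E ∩ B n)
      have himg : Γ ∩ A n ⊆ g '' (E ∩ B n) := by
        rintro z ⟨hzΓ, hzA⟩
        have hz1 : d * q^n ≤ ‖z - w‖ := hzA.1
        have hz2 : ‖z - w‖ < d * q^(n+1) := hzA.2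
        have hzw : (0:ℝ) < ‖z - w‖ := lt_of_lt_of_le hd (hdist z hzΓ)
        refine ⟨M z, ⟨⟨z, hzΓ, rfl⟩, ?_, ?_⟩, ?_⟩
        · rw [hMnorm z hzΓ, lt_div_iff₀ hzw]
          calc (q^(n+1))⁻¹ * ‖z - w‖ < (q^(n+1))⁻¹ * (d * q^(n+1)) := by
                exact mul_lt_mul_of_pos_left hz2 (by positivity)
            _ = d := by field_simp
        · rw [hMnorm z hzΓ, div_le_iff₀ hzw]
          calc d = (q^n)⁻¹ * (d * q^n) := by field_simp
            _ ≤ (q^n)⁻¹ * ‖z - w‖ := by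
                exact mul_le_mul_of_nonneg_left hz1 (by positivity)
        · rw [hg_def, hM_def]
          field_simp
          ring
      have step2 : μH[1] (Γ ∩ A n) ≤ (L : ℝ≥0∞) * μH[1] (E ∩ B n) := by
        calc μH[1] (Γ ∩ A n) ≤ μH[1] (g '' (E ∩ B n)) := measure_mono himg
          _ ≤ (L : ℝ≥0∞) ^ (1:ℝ) * μH[1] (E ∩ B n) :=
              hglip.hausdorffMeasure_image_le zero_le_one
          _ = (L : ℝ≥0∞) * μH[1] (E ∩ B n) := by rw [ENNReal.rpow_one]
      calc ∫⁻ z in Γ ∩ A n, ENNReal.ofReal ((‖z - w‖ ^ 2)⁻¹) ∂μH[1]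
          ≤ ENNReal.ofReal (((d * q^n)^2)⁻¹) * ((L : ℝ≥0∞) * μH[1] (E ∩ B n)) :=
            step1.trans (mul_le_mul_right step2 _)
        _ = ENNReal.ofReal (q^2 / d) * μH[1] (E ∩ B n) := by
            rw [← mul_assoc]
            congr 1
            have hLcoe : (L : ℝ≥0∞) = ENNReal.ofReal (d * (q^(n+1))^2) := rfl
            rw [hLcoe, ← ENNReal.ofReal_mul (by positivity)]
            congr 1
            field_simp
            ring
    -- sum up
    have hsum : ∑' n, μH[1] (E ∩ B n) ≤ μH[1] E := by
      rw [← measure_iUnion hBdisj (fun n => hEmeas.inter (hBmeas n))]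
      exact measure_mono (Set.iUnion_subset fun n => Set.inter_subset_left)
    calc ∫⁻ z in Γ, ENNReal.ofReal ((‖z - w‖ ^ 2)⁻¹) ∂μH[1]
        = ∫⁻ z in ⋃ n, Γ ∩ A n, ENNReal.ofReal ((‖z - w‖ ^ 2)⁻¹) ∂μH[1] := by
          rw [← hΓcov]
      _ = ∑' n, ∫⁻ z in Γ ∩ A n, ENNReal.ofReal ((‖z - w‖ ^ 2)⁻¹) ∂μH[1] :=
          lintegral_iUnion (fun n => hΓmeas.inter (hAmeas n)) hAdisj _
      _ ≤ ∑' n, ENNReal.ofReal (q^2 / d) * μH[1] (E ∩ B n) := ENNReal.tsum_le_tsum pern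
      _ = ENNReal.ofReal (q^2 / d) * ∑' n, μH[1] (E ∩ B n) := ENNReal.tsum_mul_left
      _ ≤ ENNReal.ofReal (q^2 / d) * (ENNReal.ofReal 2 * ENNReal.ofReal K) :=
          mul_le_mul_right (hsum.trans hμE) _
      _ = ENNReal.ofReal (2 * K * q ^ 2 / d) := by
          rw [← ENNReal.ofReal_mul (by norm_num), ← ENNReal.ofReal_mul (by positivity)]
          congr 1
          field_simp
  -- let q → 1
  have h0 : Filter.Tendsto (fun n : ℕ => (1:ℝ) + 1/((n:ℝ)+1)) Filter.atTop (nhds 1) := by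
    have h := tendsto_one_div_add_atTop_nhds_zero_nat (𝕜 := ℝ)
    simpa using Filter.Tendsto.add tendsto_const_nhds h
  have h1 : Filter.Tendsto (fun n : ℕ => 2*K*((1:ℝ) + 1/((n:ℝ)+1))^2/d) Filter.atTop
      (nhds (2*K/d)) := by
    have h2 := (Filter.Tendsto.const_mul (2*K) (h0.pow 2)).div_const d
    simpa using h2
  have htend : Filter.Tendsto
      (fun n : ℕ => ENNReal.ofReal (2*K*((1:ℝ) + 1/((n:ℝ)+1))^2/d)) Filter.atTop
      (nhds (ENNReal.ofReal (2*K/d))) :=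
    (ENNReal.continuous_ofReal.tendsto _).comp h1
  refine ge_of_tendsto' htend fun n => key _ ?_
  have : (0:ℝ) < 1/((n:ℝ)+1) := by positivity
  linarith

end
end

section
/- For every C > 0 there exists M > 0, depending only on C, with the following property: if Γ is a rectifiable curve in ℂ such that ∫_Γ |z − w|⁻² |dz| ≤ C/d(w,Γ) for every w ∈ ℂ ∖ Γ (where d(w,Γ) is the distance from w to Γ), then Γ is M-regular. -/
open MeasureTheory Metric Set Real ENNReal

noncomputable section

set_option maxHeartbeats 1600000


lemma annulus_length {Γ : Set ℂ} (hconn : IsPreconnected Γ) {p : ℂ} {ε : ℝ} (hε : 0 < ε)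
    (ha : ∃ a ∈ Γ, dist a p ≤ ε) (hb : ∃ b ∈ Γ, 2 * ε ≤ dist b p) :
    ENNReal.ofReal ε ≤ μH[1] (Γ ∩ (ball p (2 * ε) \ ball p ε)) := by
  obtain ⟨a, haΓ, haε⟩ := ha
  obtain ⟨b, hbΓ, hbε⟩ := hb
  set f : ℂ → ℝ := fun x => dist x p with hf
  have hlip : LipschitzWith 1 f := LipschitzWith.dist_left p
  have hsub : Ico ε (2 * ε) ⊆ f '' (Γ ∩ (ball p (2 * ε) \ ball p ε)) := by
    intro t ht
    have htmem : t ∈ Icc (f a) (f b) :=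
      ⟨le_trans haε ht.1, le_of_lt (lt_of_lt_of_le ht.2 hbε)⟩
    obtain ⟨x, hxΓ, hxt⟩ := hconn.intermediate_value haΓ hbΓ hlip.continuous.continuousOn htmem
    refine ⟨x, ⟨hxΓ, ?_, ?_⟩, hxt⟩
    · rw [mem_ball]
      calc dist x p = t := hxt
        _ < 2 * ε := ht.2
    · intro hx
      rw [mem_ball] at hx
      have : f x = t := hxt
      simp only [hf] at this
      linarith [ht.1, this ▸ hx]
  calc ENNReal.ofReal ε = μH[1] (Ico ε (2 * ε)) := by
        rw [MeasureTheory.hausdorffMeasure_real, Real.volume_Ico]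
        norm_num
        congr 1
        ring
    _ ≤ μH[1] (f '' (Γ ∩ (ball p (2 * ε) \ ball p ε))) := measure_mono hsub
    _ ≤ (1 : ℝ≥0∞) ^ (1 : ℝ) * μH[1] (Γ ∩ (ball p (2 * ε) \ ball p ε)) :=
        hlip.hausdorffMeasure_image_le zero_le_one _
    _ = μH[1] (Γ ∩ (ball p (2 * ε) \ ball p ε)) := by simp

lemma grid_length {Γ : Set ℂ} (hconn : IsPreconnected Γ) (hmeas : MeasurableSet Γ)
    (c : ℂ) {ρ ε : ℝ} (hε : 0 < ε) (hρ : 16 * ε ≤ ρ)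
    (hdense : ∀ p ∈ closedBall c ρ, ∃ q ∈ Γ, dist p q ≤ ε)
    (hesc : ∃ b ∈ Γ, ρ + 2 * ε ≤ dist b c) :
    ENNReal.ofReal (ρ ^ 2 / (256 * ε)) ≤ μH[1] (Γ ∩ closedBall c (ρ + 2 * ε)) := by
  obtain ⟨b, hbΓ, hbc⟩ := hesc
  have hρpos : 0 < ρ := lt_of_lt_of_le (by positivity) hρ
  set n : ℕ := ⌊ρ / (8 * ε)⌋₊ with hn
  have hge2 : (2 : ℝ) ≤ ρ / (8 * ε) := by
    rw [le_div_iff₀ (by positivity)]; linarith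
  have hn2 : 2 ≤ n := Nat.le_floor (by exact_mod_cast hge2)
  have hnR : (2 : ℝ) ≤ (n : ℝ) := by exact_mod_cast hn2
  have hnle : (n : ℝ) ≤ ρ / (8 * ε) := Nat.floor_le (by positivity)
  have hnle' : 8 * ε * (n : ℝ) ≤ ρ := by
    rw [div_eq_inv_mul] at hnle
    calc 8 * ε * (n : ℝ) = (n : ℝ) * (8 * ε) := by ring
      _ ≤ (8 * ε)⁻¹ * ρ * (8 * ε) := by
          apply mul_le_mul_of_nonneg_right hnle (by positivity)
      _ = ρ := by field_simp
  have hngt : ρ / (8 * ε) - 1 < (n : ℝ) := Nat.sub_one_lt_floor _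
  set P : ℕ × ℕ → ℂ := fun ij => c + (((4 * ε * ij.1 : ℝ) : ℂ) +
    ((4 * ε * ij.2 : ℝ) : ℂ) * Complex.I) with hP
  set T : Finset (ℕ × ℕ) := Finset.range n ×ˢ Finset.range n with hT
  -- distance from P ij to c
  have hPc : ∀ ij : ℕ × ℕ, ij ∈ T → dist (P ij) c ≤ ρ - 8 * ε := by
    rintro ⟨i, j⟩ hij
    simp only [hT, Finset.mem_product, Finset.mem_range] at hij
    have hi : (i : ℝ) + 1 ≤ (n : ℝ) := by exact_mod_cast hij.1
    have hj : (j : ℝ) + 1 ≤ (n : ℝ) := by exact_mod_cast hij.2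
    have heq : P (i, j) - c = ((4 * ε * i : ℝ) : ℂ) + ((4 * ε * j : ℝ) : ℂ) * Complex.I := by
      simp [hP]
    rw [dist_eq_norm, heq, Complex.norm_add_mul_I]
    have hii : (i : ℝ) ^ 2 ≤ ((n : ℝ) - 1) ^ 2 := by
      nlinarith [(Nat.cast_nonneg i : (0:ℝ) ≤ (i:ℝ))]
    have hjj : (j : ℝ) ^ 2 ≤ ((n : ℝ) - 1) ^ 2 := by
      nlinarith [(Nat.cast_nonneg j : (0:ℝ) ≤ (j:ℝ))]
    have hmul := mul_le_mul_of_nonneg_left hii (by positivity : (0:ℝ) ≤ 16 * ε ^ 2)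
    have hmul2 := mul_le_mul_of_nonneg_left hjj (by positivity : (0:ℝ) ≤ 16 * ε ^ 2)
    have hi2 : (4 * ε * (i : ℝ)) ^ 2 ≤ (4 * ε * ((n : ℝ) - 1)) ^ 2 := by nlinarith [hmul]
    have hj2 : (4 * ε * (j : ℝ)) ^ 2 ≤ (4 * ε * ((n : ℝ) - 1)) ^ 2 := by nlinarith [hmul2]
    calc √((4 * ε * (i : ℝ)) ^ 2 + (4 * ε * (j : ℝ)) ^ 2)
        ≤ √((8 * ε * ((n : ℝ) - 1)) ^ 2) := by
          apply Real.sqrt_le_sqrt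
          nlinarith [hi2, hj2, sq_nonneg (4 * ε * ((n:ℝ) - 1))]
      _ = 8 * ε * ((n : ℝ) - 1) := Real.sqrt_sq (by nlinarith [hε.le])
      _ ≤ ρ - 8 * ε := by nlinarith [hε.le]
  -- distance between distinct grid points
  have hPP : ∀ ij kl : ℕ × ℕ, ij ≠ kl → 4 * ε ≤ dist (P ij) (P kl) := by
    rintro ⟨i, j⟩ ⟨k, l⟩ hne
    have heq : P (i, j) - P (k, l) = ((4 * ε * i - 4 * ε * k : ℝ) : ℂ) +
        ((4 * ε * j - 4 * ε * l : ℝ) : ℂ) * Complex.I := by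
      simp [hP]; push_cast; ring
    rw [dist_eq_norm, heq, Complex.norm_add_mul_I]
    have hcases : i ≠ k ∨ j ≠ l := by
      by_contra h; push_neg at h; exact hne (by simp [h.1, h.2])
    have habs : (1 : ℝ) ≤ ((i : ℝ) - k) ^ 2 ∨ (1 : ℝ) ≤ ((j : ℝ) - l) ^ 2 := by
      rcases hcases with h | h
      · left
        have h1 : (1 : ℤ) ≤ |(i : ℤ) - (k : ℤ)| :=
          Int.one_le_abs (sub_ne_zero.mpr (fun hh => h (by exact_mod_cast hh)))
        have h2 : (1 : ℝ) ≤ |(i : ℝ) - (k : ℝ)| := by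
          calc (1 : ℝ) = ((1 : ℤ) : ℝ) := by norm_num
            _ ≤ |((i : ℤ) - (k : ℤ) : ℤ)| := by exact_mod_cast h1
            _ = |(i : ℝ) - (k : ℝ)| := by push_cast; ring_nf
        nlinarith [abs_nonneg ((i:ℝ) - k), sq_abs ((i:ℝ) - k)]
      · right
        have h1 : (1 : ℤ) ≤ |(j : ℤ) - (l : ℤ)| :=
          Int.one_le_abs (sub_ne_zero.mpr (fun hh => h (by exact_mod_cast hh)))
        have h2 : (1 : ℝ) ≤ |(j : ℝ) - (l : ℝ)| := by
          calc (1 : ℝ) = ((1 : ℤ) : ℝ) := by norm_num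
            _ ≤ |((j : ℤ) - (l : ℤ) : ℤ)| := by exact_mod_cast h1
            _ = |(j : ℝ) - (l : ℝ)| := by push_cast; ring_nf
        nlinarith [abs_nonneg ((j:ℝ) - l), sq_abs ((j:ℝ) - l)]
    have key : (4 * ε) ^ 2 ≤ (4 * ε * (i : ℝ) - 4 * ε * k) ^ 2 +
        (4 * ε * (j : ℝ) - 4 * ε * l) ^ 2 := by
      have e1 : (4 * ε * (i : ℝ) - 4 * ε * k) ^ 2 = 16 * ε ^ 2 * ((i:ℝ) - k) ^ 2 := by ring
      have e2 : (4 * ε * (j : ℝ) - 4 * ε * l) ^ 2 = 16 * ε ^ 2 * ((j:ℝ) - l) ^ 2 := by ring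
      rcases habs with h | h
      · have := mul_le_mul_of_nonneg_left h (by positivity : (0:ℝ) ≤ 16 * ε ^ 2)
        rw [e1, e2]
        nlinarith [sq_nonneg ((j:ℝ) - l), sq_nonneg ε]
      · have := mul_le_mul_of_nonneg_left h (by positivity : (0:ℝ) ≤ 16 * ε ^ 2)
        rw [e1, e2]
        nlinarith [sq_nonneg ((i:ℝ) - k), sq_nonneg ε]
    calc 4 * ε = √((4 * ε) ^ 2) := (Real.sqrt_sq (by positivity)).symm
      _ ≤ _ := Real.sqrt_le_sqrt key
  -- the annuli
  set S : ℕ × ℕ → Set ℂ := fun ij => Γ ∩ (ball (P ij) (2 * ε) \ ball (P ij) ε) with hS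
  have hSmeas : ∀ ij : ℕ × ℕ, MeasurableSet (S ij) := by
    intro ij
    exact hmeas.inter ((measurableSet_ball).diff measurableSet_ball)
  have hSdisj : (T : Set (ℕ × ℕ)).PairwiseDisjoint S := by
    intro ij _ kl _ hne
    have h4 := hPP ij kl hne
    refine Set.disjoint_left.mpr ?_
    rintro x ⟨_, hx1, _⟩ ⟨_, hx2, _⟩
    rw [mem_ball] at hx1 hx2
    have := dist_triangle (P ij) x (P kl)
    rw [dist_comm (P ij) x] at this
    linarith
  have hSlow : ∀ ij ∈ T, ENNReal.ofReal ε ≤ μH[1] (S ij) := by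
    intro ij hij
    apply annulus_length hconn hε
    · obtain ⟨q, hqΓ, hq⟩ := hdense (P ij) (by
        rw [mem_closedBall]
        linarith [hPc ij hij])
      exact ⟨q, hqΓ, by rw [dist_comm]; exact hq⟩
    · refine ⟨b, hbΓ, ?_⟩
      have h3 := dist_triangle b (P ij) c
      have h2 := hPc ij hij
      linarith
  have hSsub : ∀ ij ∈ T, S ij ⊆ Γ ∩ closedBall c (ρ + 2 * ε) := by
    intro ij hij x hx
    obtain ⟨hxΓ, hx1, _⟩ := hx
    rw [mem_ball] at hx1
    refine ⟨hxΓ, ?_⟩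
    rw [mem_closedBall]
    calc dist x c ≤ dist x (P ij) + dist (P ij) c := dist_triangle _ _ _
      _ ≤ 2 * ε + (ρ - 8 * ε) := by
          have := hPc ij hij; linarith
      _ ≤ ρ + 2 * ε := by linarith
  -- sum up
  have hsum : (T.card : ℝ≥0∞) * ENNReal.ofReal ε ≤ μH[1] (Γ ∩ closedBall c (ρ + 2 * ε)) := by
    calc (T.card : ℝ≥0∞) * ENNReal.ofReal ε = ∑ ij ∈ T, ENNReal.ofReal ε := by
          rw [Finset.sum_const, nsmul_eq_mul]
      _ ≤ ∑ ij ∈ T, μH[1] (S ij) := Finset.sum_le_sum hSlow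
      _ = μH[1] (⋃ ij ∈ T, S ij) :=
          (measure_biUnion_finset hSdisj (fun ij _ => hSmeas ij)).symm
      _ ≤ μH[1] (Γ ∩ closedBall c (ρ + 2 * ε)) := by
          apply measure_mono
          exact Set.iUnion₂_subset hSsub
  -- card count
  have hcard : T.card = n * n := by simp [hT]
  have hcount : ρ ^ 2 / (256 * ε) ≤ (n * n : ℕ) * ε := by
    have h16 : ρ / (16 * ε) ≤ (n : ℝ) := by
      have h1 : (1 : ℝ) ≤ ρ / (16 * ε) := by
        rw [le_div_iff₀ (by positivity)]; linarith
      have : ρ / (16 * ε) ≤ ρ / (8 * ε) - 1 := by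
        rw [div_sub' (by positivity : (8:ℝ) * ε ≠ 0)]
        rw [div_le_div_iff₀ (by positivity) (by positivity)]
        nlinarith [hε.le]
      linarith
    have hnn : (0:ℝ) ≤ (n:ℝ) := by positivity
    push_cast
    calc ρ ^ 2 / (256 * ε) = (ρ / (16 * ε)) * (ρ / (16 * ε)) * ε := by
          field_simp; ring
      _ ≤ (n : ℝ) * (n : ℝ) * ε := by
          apply mul_le_mul_of_nonneg_right _ hε.le
          apply mul_le_mul h16 h16 (by positivity) hnn
  calc ENNReal.ofReal (ρ ^ 2 / (256 * ε)) ≤ ENNReal.ofReal ((n * n : ℕ) * ε) :=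
        ENNReal.ofReal_le_ofReal hcount
    _ = ((n * n : ℕ) : ℝ≥0∞) * ENNReal.ofReal ε := by
        rw [ENNReal.ofReal_mul (Nat.cast_nonneg _), ENNReal.ofReal_natCast]
    _ ≤ _ := by rw [← hcard] at *; exact hsum

lemma exists_deep_point (C : ℝ) (hC : 0 < C) {Γ : Set ℂ} (hconn : IsPreconnected Γ)
    (hcomp : IsCompact Γ) (hne : Γ.Nonempty) (hfin : μH[1] Γ < ⊤)
    (hyp : ∀ w : ℂ, w ∉ Γ →
      ∫⁻ ζ in Γ, ENNReal.ofReal ((‖ζ - w‖ ^ 2)⁻¹) ∂μH[1] ≤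
        ENNReal.ofReal (C / Metric.infDist w Γ))
    (z : ℂ) (r : ℝ) (hr : 0 < r) :
    ∃ w : ℂ, w ∉ Γ ∧ r / (2 : ℝ) ^ (65536 * (⌈C⌉₊ + 1) + 7) ≤ infDist w Γ ∧
      dist w z ≤ 10 * r := by
  set K : ℕ := 65536 * (⌈C⌉₊ + 1) with hK
  set A : ℝ := (2 : ℝ) ^ (K + 7) with hA
  have hApos : (0 : ℝ) < A := by positivity
  have hA1 : (1 : ℝ) ≤ A := one_le_pow₀ (by norm_num)
  have hmeasΓ : MeasurableSet Γ := hcomp.isClosed.measurableSet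
  by_cases hbig : ∃ bb ∈ Γ, 5 * r < dist bb z
  case neg =>
    push_neg at hbig
    set w : ℂ := z + ((10 * r : ℝ) : ℂ) with hw
    have h1 : dist w z = 10 * r := by
      rw [hw, dist_eq_norm, add_sub_cancel_left, Complex.norm_real, Real.norm_eq_abs,
        abs_of_pos (by positivity)]
    have hinf : 5 * r ≤ infDist w Γ := by
      obtain ⟨q, hqΓ, hq⟩ := hcomp.exists_infDist_eq_dist hne w
      rw [hq]
      have h3 : dist q z ≤ 5 * r := hbig q hqΓ
      have h4 : dist w z ≤ dist w q + dist q z := dist_triangle _ _ _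
      linarith
    have hwΓ : w ∉ Γ := by
      intro h
      have := infDist_zero_of_mem h
      rw [this] at hinf; linarith
    exact ⟨w, hwΓ, by
      have : r / A ≤ r := div_le_self hr.le hA1
      linarith, by rw [h1]⟩
  case pos =>
    obtain ⟨bb, hbbΓ, hbb⟩ := hbig
    obtain ⟨w₁, hw₁mem, hw₁max⟩ := (isCompact_closedBall z (4 * r)).exists_isMaxOn
      ⟨z, mem_closedBall_self (by positivity)⟩ (continuous_infDist_pt Γ).continuousOn
    set d₁ : ℝ := infDist w₁ Γ with hd₁
    have hmax : ∀ p ∈ closedBall z (4 * r), infDist p Γ ≤ d₁ := fun p hp => hw₁max hp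
    have hs4r : dist w₁ z ≤ 4 * r := mem_closedBall.mp hw₁mem
    -- d₁ > 0
    have hd₁0 : 0 < d₁ := by
      rcases (infDist_nonneg : 0 ≤ d₁).lt_or_eq with h | h
      · exact h
      exfalso
      have hzero : d₁ = 0 := h.symm
      have hsubΓ : closedBall z (4 * r) ⊆ Γ := by
        intro p hp
        have h0 : infDist p Γ = 0 := le_antisymm (hzero ▸ hmax p hp) infDist_nonneg
        have := (mem_closure_iff_infDist_zero hne).2 h0
        rwa [hcomp.isClosed.closure_eq] at this
      set Tto : ℝ := (μH[1] Γ).toReal with hTto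
      have hTto0 : 0 ≤ Tto := ENNReal.toReal_nonneg
      set ε₀ : ℝ := min (r / 16) (r ^ 2 / (256 * (Tto + 1))) with hε₀
      have hε₀pos : 0 < ε₀ := lt_min (by positivity) (by positivity)
      have hε₀16 : 16 * ε₀ ≤ r := by
        have : ε₀ ≤ r / 16 := min_le_left _ _
        linarith
      have hgrid := grid_length hconn hmeasΓ z hε₀pos (by linarith : 16 * ε₀ ≤ r)
        (fun p hp => ⟨p, hsubΓ (closedBall_subset_closedBall (by linarith) hp),
          by simp [hε₀pos.le]⟩)
        ⟨z + ((4 * r : ℝ) : ℂ), hsubΓ (by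
          rw [mem_closedBall, dist_eq_norm, add_sub_cancel_left, Complex.norm_real,
            Real.norm_eq_abs, abs_of_pos (by positivity)]), by
          rw [dist_eq_norm, add_sub_cancel_left, Complex.norm_real,
            Real.norm_eq_abs, abs_of_pos (by positivity)]
          linarith⟩
      have hup : μH[1] (Γ ∩ closedBall z (r + 2 * ε₀)) ≤ μH[1] Γ :=
        measure_mono inter_subset_left
      have hlow : Tto + 1 ≤ r ^ 2 / (256 * ε₀) := by
        have h2 : ε₀ ≤ r ^ 2 / (256 * (Tto + 1)) := min_le_right _ _
        rw [le_div_iff₀ (by positivity)] at h2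
        rw [le_div_iff₀ (by positivity)]
        linarith
      have : ENNReal.ofReal (Tto + 1) ≤ μH[1] Γ :=
        le_trans (ENNReal.ofReal_le_ofReal hlow) (le_trans hgrid hup)
      rw [show μH[1] Γ = ENNReal.ofReal Tto from (ENNReal.ofReal_toReal hfin.ne).symm] at this
      have := (ENNReal.ofReal_le_ofReal_iff (by positivity)).mp this
      linarith
    have hw₁Γ : w₁ ∉ Γ := fun h => by
      have := infDist_zero_of_mem h
      rw [← hd₁] at this; linarith
    by_cases hdeep : r / A ≤ d₁
    · exact ⟨w₁, hw₁Γ, hdeep, by linarith⟩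
    exfalso
    push_neg at hdeep
    have hAd : A * d₁ < r := by
      rw [div_eq_mul_inv] at hdeep
      calc A * d₁ = d₁ * A := mul_comm _ _
        _ < r * A⁻¹ * A := by apply mul_lt_mul_of_pos_right hdeep hApos
        _ = r := by field_simp
    -- direction towards z
    set s : ℝ := dist w₁ z with hs
    set u : ℂ := if w₁ = z then 1 else (s⁻¹ : ℝ) • (z - w₁) with hu
    have hunorm : ‖u‖ = 1 := by
      rw [hu]
      split_ifs with h
      · simp
      · have hs0 : s ≠ 0 := by
          rw [hs]; exact dist_ne_zero.mpr h
        have hspos : 0 < s := lt_of_le_of_ne dist_nonneg (Ne.symm hs0)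
        rw [norm_smul, Real.norm_eq_abs, abs_of_pos (by positivity)]
        have : ‖z - w₁‖ = s := by rw [hs, dist_comm, dist_eq_norm]
        rw [this]; field_simp
    set t : ℕ → ℝ := fun k => 3 * 2 ^ (k + 6) * d₁ with ht
    set cc : ℕ → ℂ := fun k => w₁ + (t k : ℝ) • u with hcc
    set R : ℕ → ℝ := fun k => 2 ^ (k + 5) * d₁ with hR
    have htpos : ∀ k, 0 < t k := fun k => by positivity
    have hRpos : ∀ k, 0 < R k := fun k => by positivity
    have hcw : ∀ k, dist (cc k) w₁ = t k := by
      intro k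
      rw [hcc, dist_eq_norm]
      simp only [add_sub_cancel_left]
      rw [norm_smul, Real.norm_eq_abs, abs_of_pos (htpos k), hunorm, mul_one]
    have hRt : ∀ k, R k + R k ≤ t k := by
      intro k
      simp only [hR, ht]
      rw [show (2:ℝ) ^ (k + 6) = 2 * 2 ^ (k + 5) from by ring]
      linarith [mul_pos (pow_pos (show (0:ℝ) < 2 by norm_num) (k + 5)) hd₁0]
    have hradial : ∀ k, ∀ x ∈ closedBall (cc k) (R k),
        5 * 2 ^ (k + 5) * d₁ ≤ dist x w₁ ∧ dist x w₁ ≤ 7 * 2 ^ (k + 5) * d₁ := by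
      intro k x hx
      have hxc : dist x (cc k) ≤ 2 ^ (k + 5) * d₁ := by simpa [hR] using mem_closedBall.mp hx
      have htk : dist (cc k) w₁ = 6 * 2 ^ (k + 5) * d₁ := by
        rw [hcw k]; simp only [ht]; ring
      have h1 := dist_triangle (cc k) x w₁
      have h2 := dist_triangle x (cc k) w₁
      rw [dist_comm (cc k) x] at h1
      exact ⟨by linarith, by linarith⟩
    -- scale bound
    have hpow_le : ∀ k, k < K → (2:ℝ) ^ (k + 8) * d₁ ≤ A * d₁ := by
      intro k hk
      apply mul_le_mul_of_nonneg_right _ hd₁0.le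
      rw [hA]
      apply pow_le_pow_right₀ (by norm_num)
      omega
    have hRk : ∀ k, R k = 2 ^ (k + 5) * d₁ := fun k => by simp [hR]
    have htk : ∀ k, t k = 6 * 2 ^ (k + 5) * d₁ := fun k => by simp only [ht]; ring
    have hX : ∀ k : ℕ, (0:ℝ) < 2 ^ (k + 5) * d₁ :=
      fun k => mul_pos (pow_pos (by norm_num) _) hd₁0
    have h7r : ∀ k, k < K → 7 * 2 ^ (k + 5) * d₁ ≤ r := by
      intro k hk
      have h8 : 7 * (2:ℝ) ^ (k + 5) * d₁ ≤ 2 ^ (k + 8) * d₁ := by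
        rw [show (2:ℝ) ^ (k + 8) = 8 * 2 ^ (k + 5) from by ring]
        linarith [hX k]
      linarith [hpow_le k hk, hAd]
    have hsub4r : ∀ k, k < K → closedBall (cc k) (R k) ⊆ closedBall z (4 * r) := by
      intro k hk x hx
      have hxc : dist x (cc k) ≤ 2 ^ (k + 5) * d₁ := by simpa [hR] using mem_closedBall.mp hx
      have hdcz : dist (cc k) z ≤ max (s - t k) (t k) := by
        by_cases h : w₁ = z
        · rw [show z = w₁ from h.symm, hcw k]
          exact le_max_right _ _
        · have hs0 : s ≠ 0 := dist_ne_zero.mpr h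
          have hspos : 0 < s := dist_pos.mpr h
          have hcz : cc k - z = (1 - t k / s) • (w₁ - z) := by
            simp only [hcc, hu, if_neg h, smul_smul, div_eq_mul_inv]
            module
          have hnorm : dist (cc k) z = |1 - t k / s| * s := by
            rw [dist_eq_norm, hcz, norm_smul, Real.norm_eq_abs, ← dist_eq_norm, ← hs]
          rw [hnorm]
          rcases abs_cases (1 - t k / s) with ⟨he, _⟩ | ⟨he, _⟩
          · have e : (1 - t k / s) * s = s - t k := by field_simp
            rw [he, e]
            exact le_max_left _ _
          · have e : -(1 - t k / s) * s = t k - s := by field_simp; ring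
            rw [he, e]
            exact le_trans (by linarith [htpos k]) (le_max_right (s - t k) (t k))
      have htri := dist_triangle x (cc k) z
      rw [mem_closedBall]
      rcases max_cases (s - t k) (t k) with ⟨hm, _⟩ | ⟨hm, _⟩
      · rw [hm] at hdcz
        linarith [hs4r, htk k, hX k]
      · rw [hm] at hdcz
        linarith [h7r k hk, htk k, hX k]
    -- disjointness of the balls
    have haux : ∀ k l : ℕ, k < l →
        Disjoint (Γ ∩ closedBall (cc k) (R k)) (Γ ∩ closedBall (cc l) (R l)) := by
      intro k l hkl
      rw [Set.disjoint_left]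
      rintro x ⟨hxΓ, hxk⟩ ⟨-, hxl⟩
      have h1 := (hradial k x hxk).2
      have h2 := (hradial l x hxl).1
      have hll : (2:ℝ) ^ (k + 6) ≤ 2 ^ (l + 5) :=
        pow_le_pow_right₀ (by norm_num) (by omega)
      have h3 : 2 * 2 ^ (k + 5) * d₁ ≤ 2 ^ (l + 5) * d₁ := by
        have := mul_le_mul_of_nonneg_right hll hd₁0.le
        calc 2 * 2 ^ (k + 5) * d₁ = 2 ^ (k + 6) * d₁ := by ring
          _ ≤ 2 ^ (l + 5) * d₁ := this
      linarith [hX k]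
    have hdisjk : (↑(Finset.range K) : Set ℕ).PairwiseDisjoint
        (fun k => Γ ∩ closedBall (cc k) (R k)) := by
      intro k _ l _ hkl
      rcases lt_or_gt_of_ne hkl with h | h
      · exact haux k l h
      · exact (haux l k h).symm
    -- per-scale measure lower bound
    have hmeaslow : ∀ k, k < K →
        ENNReal.ofReal ((2:ℝ) ^ (2 * k) * d₁) ≤ μH[1] (Γ ∩ closedBall (cc k) (R k)) := by
      intro k hk
      have h32 : (32:ℝ) ≤ 2 ^ (k + 5) := by
        calc (32:ℝ) = 2 ^ 5 := by norm_num
          _ ≤ 2 ^ (k + 5) := pow_le_pow_right₀ (by norm_num) (by omega)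
      have h32d := mul_le_mul_of_nonneg_right h32 hd₁0.le
      have h18 : 16 * d₁ ≤ R k - 2 * d₁ := by
        rw [hRk]; linarith
      have hdense : ∀ p ∈ closedBall (cc k) (R k - 2 * d₁), ∃ q ∈ Γ, dist p q ≤ d₁ := by
        intro p hp
        have hp' : p ∈ closedBall (cc k) (R k) :=
          closedBall_subset_closedBall (by linarith [hd₁0]) hp
        obtain ⟨q, hqΓ, hq⟩ := hcomp.exists_infDist_eq_dist hne p
        exact ⟨q, hqΓ, by rw [← hq]; exact hmax p (hsub4r k hk hp')⟩
      have hccz : dist (cc k) z ≤ 4 * r :=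
        mem_closedBall.mp (hsub4r k hk (mem_closedBall_self (hRpos k).le))
      have hesc : ∃ b ∈ Γ, (R k - 2 * d₁) + 2 * d₁ ≤ dist b (cc k) := by
        refine ⟨bb, hbbΓ, ?_⟩
        have htri := dist_triangle bb (cc k) z
        have hRr : R k ≤ r := by
          rw [hRk]; linarith [h7r k hk, hX k]
        have : R k - 2 * d₁ + 2 * d₁ = R k := by ring
        rw [this]
        linarith
      have hgk := grid_length hconn hmeasΓ (cc k) hd₁0 h18 hdense hesc
      rw [show R k - 2 * d₁ + 2 * d₁ = R k from by ring] at hgk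
      refine le_trans (ENNReal.ofReal_le_ofReal ?_) hgk
      -- 2^(2k) d₁ ≤ (R k - 2 d₁)^2 / (256 d₁)
      have h2k4 : (2:ℝ) ≤ 2 ^ (k + 4) := by
        calc (2:ℝ) = 2 ^ 1 := by norm_num
          _ ≤ 2 ^ (k + 4) := pow_le_pow_right₀ (by norm_num) (by omega)
      have hRlow : 2 ^ (k + 4) * d₁ ≤ R k - 2 * d₁ := by
        rw [hRk]
        have := mul_le_mul_of_nonneg_right h2k4 hd₁0.le
        have he : (2:ℝ) ^ (k + 5) = 2 * 2 ^ (k + 4) := by ring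
        rw [he]
        linarith [mul_pos (pow_pos (show (0:ℝ) < 2 by norm_num) (k + 4)) hd₁0]
      rw [le_div_iff₀ (by positivity)]
      have hsq : (2 ^ (k + 4) * d₁) ^ 2 ≤ (R k - 2 * d₁) ^ 2 :=
        pow_le_pow_left₀ (by positivity) hRlow 2
      have hexp : ((2:ℝ) ^ (k + 4)) ^ 2 = 2 ^ (2 * k) * 256 := by
        rw [← pow_mul, show (k + 4) * 2 = 2 * k + 8 from by ring, pow_add]
        norm_num
      calc 2 ^ (2 * k) * d₁ * (256 * d₁) = ((2:ℝ) ^ (k + 4)) ^ 2 * d₁ ^ 2 := by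
            rw [hexp]; ring
        _ = (2 ^ (k + 4) * d₁) ^ 2 := by ring
        _ ≤ (R k - 2 * d₁) ^ 2 := hsq
    -- the integrand
    set f : ℂ → ℝ≥0∞ := fun ζ => ENNReal.ofReal ((‖ζ - w₁‖ ^ 2)⁻¹) with hf
    have hfmeas : Measurable f := by
      apply Measurable.ennreal_ofReal
      exact (((continuous_id.sub continuous_const).norm.pow 2).measurable).inv
    have hstep3 : ∀ k, k < K → ENNReal.ofReal ((65536 * d₁)⁻¹) ≤
        ∫⁻ ζ in Γ ∩ closedBall (cc k) (R k), f ζ ∂μH[1] := by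
      intro k hk
      have hconst : ∀ ζ ∈ Γ ∩ closedBall (cc k) (R k),
          ENNReal.ofReal ((((2:ℝ) ^ (k + 8) * d₁) ^ 2)⁻¹) ≤ f ζ := by
        intro ζ hζ
        apply ENNReal.ofReal_le_ofReal
        have h1 := (hradial k ζ hζ.2).2
        have h5 := (hradial k ζ hζ.2).1
        have hζpos : 0 < ‖ζ - w₁‖ := by
          rw [← dist_eq_norm]
          linarith [hX k]
        have h2 : ‖ζ - w₁‖ ≤ 2 ^ (k + 8) * d₁ := by
          rw [← dist_eq_norm]
          calc dist ζ w₁ ≤ 7 * 2 ^ (k + 5) * d₁ := h1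
            _ ≤ 2 ^ (k + 8) * d₁ := by
                rw [show (2:ℝ) ^ (k + 8) = 8 * 2 ^ (k + 5) from by ring]
                linarith [hX k]
        have := one_div_le_one_div_of_le (by positivity : (0:ℝ) < ‖ζ - w₁‖ ^ 2)
          (pow_le_pow_left₀ (norm_nonneg _) h2 2)
        rw [one_div, one_div] at this
        exact this
      have hconsteq : ENNReal.ofReal ((65536 * d₁)⁻¹) =
          ENNReal.ofReal ((((2:ℝ) ^ (k + 8) * d₁) ^ 2)⁻¹) *
            ENNReal.ofReal ((2:ℝ) ^ (2 * k) * d₁) := by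
        rw [← ENNReal.ofReal_mul (by positivity)]
        congr 1
        have he : ((2:ℝ) ^ (k + 8)) ^ 2 = 2 ^ (2 * k) * 65536 := by
          rw [← pow_mul, show (k + 8) * 2 = 2 * k + 16 from by ring, pow_add]
          norm_num
        have he2 : ((2:ℝ) ^ (k + 8) * d₁) ^ 2 = 2 ^ (2 * k) * 65536 * d₁ ^ 2 := by
          rw [mul_pow, he]
        rw [he2]
        have hd' : d₁ ≠ 0 := hd₁0.ne'
        have hp' : ((2:ℝ) ^ (2 * k)) ≠ 0 := by positivity
        field_simp
      calc ENNReal.ofReal ((65536 * d₁)⁻¹)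
          = ENNReal.ofReal ((((2:ℝ) ^ (k + 8) * d₁) ^ 2)⁻¹) *
            ENNReal.ofReal ((2:ℝ) ^ (2 * k) * d₁) := hconsteq
        _ ≤ ENNReal.ofReal ((((2:ℝ) ^ (k + 8) * d₁) ^ 2)⁻¹) *
            μH[1] (Γ ∩ closedBall (cc k) (R k)) :=
            mul_le_mul_right (hmeaslow k hk) _
        _ = ∫⁻ _ in Γ ∩ closedBall (cc k) (R k),
              ENNReal.ofReal ((((2:ℝ) ^ (k + 8) * d₁) ^ 2)⁻¹) ∂μH[1] :=
            (setLIntegral_const _ _).symm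
        _ ≤ ∫⁻ ζ in Γ ∩ closedBall (cc k) (R k), f ζ ∂μH[1] :=
            setLIntegral_mono hfmeas hconst
    -- summation and contradiction
    have hUnion : ∫⁻ ζ in ⋃ k ∈ Finset.range K, Γ ∩ closedBall (cc k) (R k), f ζ ∂μH[1]
        = ∑ k ∈ Finset.range K, ∫⁻ ζ in Γ ∩ closedBall (cc k) (R k), f ζ ∂μH[1] :=
      lintegral_biUnion_finset hdisjk
        (fun k _ => hmeasΓ.inter measurableSet_closedBall) f
    have hUsub : (⋃ k ∈ Finset.range K, Γ ∩ closedBall (cc k) (R k)) ⊆ Γ := by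
      simp only [Set.iUnion_subset_iff]
      exact fun k _ => inter_subset_left
    have hsum : (K : ℝ≥0∞) * ENNReal.ofReal ((65536 * d₁)⁻¹) ≤
        ∫⁻ ζ in Γ, f ζ ∂μH[1] := by
      calc (K : ℝ≥0∞) * ENNReal.ofReal ((65536 * d₁)⁻¹)
          = ∑ _k ∈ Finset.range K, ENNReal.ofReal ((65536 * d₁)⁻¹) := by
            rw [Finset.sum_const, Finset.card_range, nsmul_eq_mul]
        _ ≤ ∑ k ∈ Finset.range K, ∫⁻ ζ in Γ ∩ closedBall (cc k) (R k), f ζ ∂μH[1] :=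
            Finset.sum_le_sum (fun k hk => hstep3 k (Finset.mem_range.mp hk))
        _ = ∫⁻ ζ in ⋃ k ∈ Finset.range K, Γ ∩ closedBall (cc k) (R k), f ζ ∂μH[1] :=
            hUnion.symm
        _ ≤ ∫⁻ ζ in Γ, f ζ ∂μH[1] := lintegral_mono_set hUsub
    have hhyp := hyp w₁ hw₁Γ
    have hchain : ENNReal.ofReal ((K : ℝ) * (65536 * d₁)⁻¹) ≤ ENNReal.ofReal (C / d₁) := by
      calc ENNReal.ofReal ((K : ℝ) * (65536 * d₁)⁻¹)
          = (K : ℝ≥0∞) * ENNReal.ofReal ((65536 * d₁)⁻¹) := by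
            rw [ENNReal.ofReal_mul (by positivity), ENNReal.ofReal_natCast]
        _ ≤ ∫⁻ ζ in Γ, f ζ ∂μH[1] := hsum
        _ ≤ ENNReal.ofReal (C / infDist w₁ Γ) := hhyp
        _ = ENNReal.ofReal (C / d₁) := by rw [← hd₁]
    have hreal : (K : ℝ) * (65536 * d₁)⁻¹ ≤ C / d₁ :=
      (ENNReal.ofReal_le_ofReal_iff (by positivity)).mp hchain
    have hd' : d₁ ≠ 0 := hd₁0.ne'
    have hKC : (K : ℝ) ≤ 65536 * C := by
      rw [div_eq_mul_inv] at hreal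
      have h3 := mul_le_mul_of_nonneg_right hreal
        (mul_pos (show (0:ℝ) < 65536 by norm_num) hd₁0).le
      calc (K : ℝ) = (K : ℝ) * (65536 * d₁)⁻¹ * (65536 * d₁) := by field_simp
        _ ≤ C * d₁⁻¹ * (65536 * d₁) := h3
        _ = 65536 * C := by field_simp
    have hceil : C ≤ (⌈C⌉₊ : ℝ) := Nat.le_ceil C
    have hKcast : (K : ℝ) = 65536 * ((⌈C⌉₊ : ℝ) + 1) := by
      rw [hK]; push_cast; ring
    linarith

/-- If a rectifiable curve `Γ` satisfies `∫_Γ |z-w|⁻² |dz| ≤ C / d(w,Γ)` for every `w ∉ Γ`,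
then `Γ` is `M`-regular for some `M` depending only on `C`. -/
theorem ahlforsRegular_of_inversion_length_bounded (C : ℝ) (hC : 0 < C) :
    ∃ M : ℝ, 0 < M ∧ ∀ Γ : Set ℂ, IsRectifiableCurve Γ →
      (∀ w : ℂ, w ∉ Γ →
        ∫⁻ z in Γ, ENNReal.ofReal ((‖z - w‖ ^ 2)⁻¹) ∂μH[1] ≤
          ENNReal.ofReal (C / Metric.infDist w Γ)) →
      IsAhlforsRegular Γ M := by
  set A : ℝ := (2 : ℝ) ^ (65536 * (⌈C⌉₊ + 1) + 7) with hA
  have hApos : (0 : ℝ) < A := by positivity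
  refine ⟨121 * C * A, by positivity, ?_⟩
  rintro Γ ⟨⟨γ, hγc, hγim⟩, hfin⟩ hyp z r hr
  have hconn : IsPreconnected Γ := by
    rw [← hγim]
    exact isPreconnected_Icc.image γ hγc.continuousOn
  have hcomp : IsCompact Γ := by
    rw [← hγim]
    exact isCompact_Icc.image hγc
  have hne : Γ.Nonempty := by
    rw [← hγim]
    exact ⟨γ 0, ⟨0, ⟨le_refl 0, zero_le_one⟩, rfl⟩⟩
  have hmeasΓ : MeasurableSet Γ := hcomp.isClosed.measurableSet
  obtain ⟨w, hwΓ, hwdeep, hwz⟩ := exists_deep_point C hC hconn hcomp hne hfin hyp z r hr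
  set f : ℂ → ℝ≥0∞ := fun ζ => ENNReal.ofReal ((‖ζ - w‖ ^ 2)⁻¹) with hf
  have hfmeas : Measurable f := by
    apply Measurable.ennreal_ofReal
    exact (((continuous_id.sub continuous_const).norm.pow 2).measurable).inv
  have hinfpos : 0 < infDist w Γ := lt_of_lt_of_le (by positivity) hwdeep
  have hconst : ∀ ζ ∈ Γ ∩ ball z r,
      ENNReal.ofReal ((121 * r ^ 2)⁻¹) ≤ f ζ := by
    rintro ζ ⟨hζΓ, hζb⟩
    apply ENNReal.ofReal_le_ofReal
    have h1 : dist ζ w ≤ 11 * r := by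
      have h2 : dist ζ z < r := mem_ball.mp hζb
      have := dist_triangle ζ z w
      rw [dist_comm z w] at this
      linarith
    have hpos : 0 < ‖ζ - w‖ := by
      rw [← dist_eq_norm, dist_comm]
      exact lt_of_lt_of_le hinfpos (infDist_le_dist_of_mem hζΓ)
    have h2 : ‖ζ - w‖ ^ 2 ≤ 121 * r ^ 2 := by
      have : ‖ζ - w‖ ≤ 11 * r := by rw [← dist_eq_norm]; exact h1
      nlinarith [hpos.le]
    have := one_div_le_one_div_of_le (by positivity : (0:ℝ) < ‖ζ - w‖ ^ 2) h2
    rw [one_div, one_div] at this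
    exact this
  have hchain : ENNReal.ofReal ((121 * r ^ 2)⁻¹) * μH[1] (Γ ∩ ball z r) ≤
      ENNReal.ofReal (C * A / r) := by
    calc ENNReal.ofReal ((121 * r ^ 2)⁻¹) * μH[1] (Γ ∩ ball z r)
        = ∫⁻ _ in Γ ∩ ball z r, ENNReal.ofReal ((121 * r ^ 2)⁻¹) ∂μH[1] :=
          (setLIntegral_const _ _).symm
      _ ≤ ∫⁻ ζ in Γ ∩ ball z r, f ζ ∂μH[1] := setLIntegral_mono hfmeas hconst
      _ ≤ ∫⁻ ζ in Γ, f ζ ∂μH[1] := lintegral_mono_set inter_subset_left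
      _ ≤ ENNReal.ofReal (C / infDist w Γ) := hyp w hwΓ
      _ ≤ ENNReal.ofReal (C * A / r) := by
          apply ENNReal.ofReal_le_ofReal
          have h3 : C / infDist w Γ ≤ C / (r / A) :=
            div_le_div_of_nonneg_left hC.le (by positivity) hwdeep
          calc C / infDist w Γ ≤ C / (r / A) := h3
            _ = C * A / r := by field_simp
  have ha : ENNReal.ofReal ((121 * r ^ 2)⁻¹) = (ENNReal.ofReal (121 * r ^ 2))⁻¹ :=
    ENNReal.ofReal_inv_of_pos (by positivity)
  have hne0 : ENNReal.ofReal (121 * r ^ 2) ≠ 0 := (ENNReal.ofReal_pos.mpr (by positivity)).ne'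
  calc μH[1] (Γ ∩ ball z r)
      = ENNReal.ofReal (121 * r ^ 2) *
        (ENNReal.ofReal ((121 * r ^ 2)⁻¹) * μH[1] (Γ ∩ ball z r)) := by
        rw [ha, ← mul_assoc, ENNReal.mul_inv_cancel hne0 ENNReal.ofReal_ne_top, one_mul]
    _ ≤ ENNReal.ofReal (121 * r ^ 2) * ENNReal.ofReal (C * A / r) := mul_le_mul_right hchain _
    _ = ENNReal.ofReal ((121 * r ^ 2) * (C * A / r)) := (ENNReal.ofReal_mul (by positivity)).symm
    _ = ENNReal.ofReal (121 * C * A * r) := by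
        congr 1
        field_simp


end
end
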